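/- arXiv:2508.12847 — 6 statements merged into one kernel-verified Lean document; each statement's English description precedes it below -/
import Mathlib

section
/- Functional Representation Lemma: For any pair of jointly distributed random variables (X,Y) taking values in finite sets 𝒳 and 𝒴, there exists a probability space carrying random variables (X',Y',U) such that (X',Y') has the same joint distribution as (X,Y), U takes values in a finite set 𝒰 with |𝒰| ≤ |𝒳|(|𝒴|−1)+1, U is independent of X' (equivalently I(U;X')=0), and Y' is a deterministic function of (U,X') (equivalently H(Y'|U,X')=0). -/
open MeasureTheory ProbabilityTheory

/-- Shannon entropy (base 2) of a random variable with values in a finite type,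
with the convention `0 · log₂ 0 = 0`. -/
noncomputable def ent {Ω α : Type*} [MeasurableSpace Ω] [Fintype α]
    (μ : Measure Ω) (X : Ω → α) : ℝ :=
  ∑ a : α, -((μ (X ⁻¹' {a})).toReal * Real.logb 2 ((μ (X ⁻¹' {a})).toReal))

/-- Conditional Shannon entropy `H(X | Y)` (base 2). -/
noncomputable def condEnt {Ω α β : Type*} [MeasurableSpace Ω] [Fintype α] [Fintype β]
    (μ : Measure Ω) (X : Ω → α) (Y : Ω → β) : ℝ :=
  ent μ (fun ω => (X ω, Y ω)) - ent μ Y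

/-- Mutual information `I(X ; Y)` (base 2). -/
noncomputable def mutInf {Ω α β : Type*} [MeasurableSpace Ω] [Fintype α] [Fintype β]
    (μ : Measure Ω) (X : Ω → α) (Y : Ω → β) : ℝ :=
  ent μ X + ent μ Y - ent μ (fun ω => (X ω, Y ω))

/-- Conditional mutual information `I(X ; Y | Z)` (base 2). -/
noncomputable def condMutInf {Ω α β γ : Type*} [MeasurableSpace Ω] [Fintype α] [Fintype β]
    [Fintype γ] (μ : Measure Ω) (X : Ω → α) (Y : Ω → β) (Z : Ω → γ) : ℝ :=
  ent μ (fun ω => (X ω, Z ω)) + ent μ (fun ω => (Y ω, Z ω))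
    - ent μ (fun ω => (X ω, Y ω, Z ω)) - ent μ Z

open scoped Classical ENNReal

/-- every function out of a finite measurable-singleton space is measurable -/
lemma meas_all {α β : Type*} [MeasurableSpace α] [MeasurableSingletonClass α] [Finite α]
    [MeasurableSpace β] (f : α → β) : Measurable f := fun s _ => (Set.toFinite _).measurableSet

/-- entropy of (F ∘ Z, Z) equals entropy of Z -/
lemma ent_pair_fun {Ω β γ : Type*} [MeasurableSpace Ω] [Fintype β] [Fintype γ]
    [DecidableEq β]
    (μ : Measure Ω) (Z : Ω → γ) (F : γ → β) :
    ent μ (fun ω => (F (Z ω), Z ω)) = ent μ Z := by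
  rw [ent, Fintype.sum_prod_type_right, ent]
  refine Finset.sum_congr rfl fun c _ => ?_
  rw [Finset.sum_eq_single (F c)]
  · have : (fun ω => (F (Z ω), Z ω)) ⁻¹' {(F c, c)} = Z ⁻¹' {c} := by
      ext ω; simp only [Set.mem_preimage, Set.mem_singleton_iff, Prod.ext_iff]
      constructor
      · exact fun h => h.2
      · exact fun h => ⟨by rw [h], h⟩
    rw [this]
  · intro b _ hb
    have : (fun ω => (F (Z ω), Z ω)) ⁻¹' {(b, c)} = ∅ := by
      ext ω; simp only [Set.mem_preimage, Set.mem_singleton_iff, Prod.ext_iff,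
        Set.mem_empty_iff_false, iff_false, not_and]
      intro h h2; exact hb (h2 ▸ h.symm)
    simp [this]
  · simp

/-- splitting log of product, valid with 0 conventions -/
lemma mul_logb_mul (a b : ℝ) :
    (a*b) * Real.logb 2 (a*b) = a*b*Real.logb 2 a + a*b*Real.logb 2 b := by
  rcases eq_or_ne a 0 with h | h; · simp [h]
  rcases eq_or_ne b 0 with h' | h'; · simp [h']
  rw [Real.logb, Real.log_mul h h', Real.logb, Real.logb]; ring

lemma exists_coupling {𝒳 𝒴 : Type} [Fintype 𝒳] [Fintype 𝒴] [Nonempty 𝒳] [Nonempty 𝒴]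
    (r : 𝒳 → 𝒴 → ℝ) (hr0 : ∀ x y, 0 ≤ r x y) (hr1 : ∀ x, ∑ y, r x y = 1) :
    ∃ (N : ℕ) (q : Fin N → ℝ) (g : Fin N → 𝒳 → 𝒴),
      N ≤ Fintype.card 𝒳 * (Fintype.card 𝒴 - 1) + 1 ∧
      (∀ u, 0 ≤ q u) ∧ (∑ u, q u = 1) ∧
      (∀ x y, ∑ u, (if g u x = y then q u else 0) = r x y) := by
  classical
  set m := Fintype.card 𝒴 with hmdef
  have hm : 0 < m := Fintype.card_pos
  set e : Fin m ≃ 𝒴 := (Fintype.equivFin 𝒴).symm with hedef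
  set c : 𝒳 → ℕ → ℝ :=
    fun x k => ∑ y ∈ Finset.univ.filter (fun y => ((e.symm y : Fin m) : ℕ) < k), r x y
    with hcdef
  have hc0 : ∀ x, c x 0 = 0 := by intro x; simp [hcdef]
  have hcm : ∀ x k, m ≤ k → c x k = 1 := by
    intro x k hk
    rw [hcdef, ← hr1 x]
    apply Finset.sum_congr _ (fun _ _ => rfl)
    rw [Finset.filter_true_of_mem]
    intro y _
    exact lt_of_lt_of_le (e.symm y).2 hk
  have hcmono : ∀ x, Monotone (c x) := by
    intro x i j hij
    apply Finset.sum_le_sum_of_subset_of_nonneg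
    · intro y hy
      simp only [Finset.mem_filter, Finset.mem_univ, true_and] at hy ⊢
      omega
    · intro y _ _; exact hr0 x y
  have hcnn : ∀ x k, 0 ≤ c x k := by
    intro x k
    apply Finset.sum_nonneg
    intro y _; exact hr0 x y
  have hcle1 : ∀ x k, c x k ≤ 1 := by
    intro x k
    rcases le_or_gt m k with h | h
    · exact le_of_eq (hcm x k h)
    · calc c x k ≤ c x m := hcmono x h.le
        _ = 1 := hcm x m le_rfl
  have hcstep : ∀ x (j : Fin m), c x ((j:ℕ)+1) - c x (j:ℕ) = r x (e j) := by
    intro x j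
    have hins : Finset.univ.filter (fun y => ((e.symm y : Fin m) : ℕ) < (j:ℕ)+1)
        = insert (e j) (Finset.univ.filter (fun y => ((e.symm y : Fin m) : ℕ) < (j:ℕ))) := by
      ext y
      simp only [Finset.mem_filter, Finset.mem_univ, true_and, Finset.mem_insert]
      constructor
      · intro h
        rcases Nat.lt_succ_iff_lt_or_eq.1 h with h | h
        · exact Or.inr h
        · left
          have : e.symm y = j := Fin.ext h
          rw [← this, Equiv.apply_symm_apply]
      · rintro (h | h)
        · rw [h, Equiv.symm_apply_apply]; omega
        · omega
    have hnot : e j ∉ Finset.univ.filter (fun y => ((e.symm y : Fin m) : ℕ) < (j:ℕ)) := by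
      simp [Equiv.symm_apply_apply]
    rw [hcdef]
    simp only []
    rw [hins, Finset.sum_insert hnot]
    ring
  -- the breakpoint set
  set B : Finset ℝ :=
    insert 0 (insert 1 ((Finset.univ ×ˢ Finset.Ico 1 m).image (fun p : 𝒳 × ℕ => c p.1 p.2)))
    with hBdef
  have h0B : (0:ℝ) ∈ B := by simp [hBdef]
  have h1B : (1:ℝ) ∈ B := by simp [hBdef]
  have hBmem : ∀ b ∈ B, 0 ≤ b ∧ b ≤ 1 := by
    intro b hb
    rw [hBdef] at hb
    simp only [Finset.mem_insert, Finset.mem_image, Finset.mem_product] at hb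
    rcases hb with h | h | ⟨⟨x, k⟩, _, h⟩
    · simp [h]
    · simp [h]
    · rw [← h]; exact ⟨hcnn x k, hcle1 x k⟩
  have hcB : ∀ x k, k ≤ m → c x k ∈ B := by
    intro x k hk
    rcases Nat.eq_zero_or_pos k with h | h
    · rw [h, hc0]; exact h0B
    rcases eq_or_lt_of_le hk with h2 | h2
    · rw [h2, hcm x m le_rfl]; exact h1B
    · rw [hBdef]
      apply Finset.mem_insert_of_mem
      apply Finset.mem_insert_of_mem
      apply Finset.mem_image.2
      exact ⟨(x, k), by simp [Finset.mem_Ico]; omega, rfl⟩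
  set n := B.card with hndef
  have hn2 : 2 ≤ n := by
    rw [hndef]
    apply Finset.one_lt_card.2
    exact ⟨0, h0B, 1, h1B, by norm_num⟩
  have hcard : n ≤ Fintype.card 𝒳 * (m - 1) + 2 := by
    rw [hndef, hBdef]
    calc (insert 0 (insert 1 ((Finset.univ ×ˢ Finset.Ico 1 m).image
            (fun p : 𝒳 × ℕ => c p.1 p.2)))).card
        ≤ ((Finset.univ ×ˢ Finset.Ico 1 m).image (fun p : 𝒳 × ℕ => c p.1 p.2)).card + 2 := by
          have h1 := Finset.card_insert_le (1:ℝ)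
            ((Finset.univ ×ˢ Finset.Ico 1 m).image (fun p : 𝒳 × ℕ => c p.1 p.2))
          have h2 := Finset.card_insert_le (0:ℝ)
            (insert 1 ((Finset.univ ×ˢ Finset.Ico 1 m).image (fun p : 𝒳 × ℕ => c p.1 p.2)))
          omega
      _ ≤ (Finset.univ ×ˢ Finset.Ico 1 m).card + 2 := by
          have := Finset.card_image_le (s := Finset.univ ×ˢ Finset.Ico 1 m)
            (f := fun p : 𝒳 × ℕ => c p.1 p.2)
          omega
      _ = Fintype.card 𝒳 * (m - 1) + 2 := by
          rw [Finset.card_product, Nat.card_Ico]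
          simp [Finset.card_univ]
  set f : Fin n ↪o ℝ := B.orderEmbOfFin rfl with hfdef
  have hfmem : ∀ i, f i ∈ B := fun i => Finset.orderEmbOfFin_mem B rfl i
  have hsurj : ∀ b ∈ B, ∃ i, f i = b := by
    intro b hb
    have h := Finset.range_orderEmbOfFin B (rfl : B.card = n)
    rw [Set.ext_iff] at h
    exact (h b).2 hb
  have hmono : StrictMono f := f.strictMono
  have hf0 : ∀ i : Fin n, f ⟨0, by omega⟩ ≤ f i := by
    intro i
    apply hmono.monotone
    rw [Fin.le_def]
    simp only []
    omega
  have hf0v : f ⟨0, by omega⟩ = 0 := by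
    obtain ⟨i0, hi0⟩ := hsurj 0 h0B
    have h1 := hf0 i0
    rw [hi0] at h1
    have h2 := (hBmem _ (hfmem ⟨0, by omega⟩)).1
    linarith
  have hftopv : f ⟨n-1, by omega⟩ = 1 := by
    obtain ⟨i1, hi1⟩ := hsurj 1 h1B
    have h1 : f i1 ≤ f ⟨n-1, by omega⟩ := by
      apply hmono.monotone
      rw [Fin.le_def]
      simp only []
      omega
    rw [hi1] at h1
    have h2 := (hBmem _ (hfmem ⟨n-1, by omega⟩)).2
    linarith
  set s : ℕ → ℝ := fun i => f ⟨min i (n-1), by omega⟩ with hsdef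
  have hsval : ∀ i, i ≤ n-1 → ∀ h : i < n, s i = f ⟨i, h⟩ := by
    intro i hi h
    rw [hsdef]
    simp only []
    congr 1
    exact Fin.ext (by simp [Nat.min_eq_left hi])
  have hs0 : s 0 = 0 := by
    rw [hsval 0 (by omega) (by omega), hf0v]
  have hstop : s (n-1) = 1 := by
    rw [hsval (n-1) le_rfl (by omega), hftopv]
  have hsmono : Monotone s := by
    intro i j hij
    apply hmono.monotone
    rw [Fin.le_def]
    simp only []
    omega
  have hslt : ∀ i j, i < j → j ≤ n-1 → s i < s j := by
    intro i j hij hj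
    rw [hsval i (by omega) (by omega), hsval j hj (by omega)]
    apply hmono
    rw [Fin.lt_def]
    exact hij
  have hsnn : ∀ i, 0 ≤ s i := by
    intro i
    exact (hBmem _ (hfmem _)).1
  -- the answer
  set q : Fin (n-1) → ℝ := fun u => s ((u:ℕ)+1) - s (u:ℕ) with hqdef
  set J : 𝒳 → ℕ → ℕ := fun x i => Nat.findGreatest (fun k => c x k ≤ s i) m with hJdef
  set g : Fin (n-1) → 𝒳 → 𝒴 := fun u x => e ⟨J x (u:ℕ) % m, Nat.mod_lt _ hm⟩ with hgdef
  have hq0 : ∀ u, 0 ≤ q u := by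
    intro u
    rw [hqdef]
    simp only [sub_nonneg]
    exact hsmono (by omega)
  have hq1 : ∑ u, q u = 1 := by
    rw [hqdef]
    rw [Fin.sum_univ_eq_sum_range (fun i => s (i+1) - s i) (n-1)]
    rw [Finset.sum_range_sub s (n-1), hs0, hstop]
    ring
  have hslt1 : ∀ i, i < n-1 → s i < 1 := by
    intro i hi
    rw [← hstop]
    exact hslt i (n-1) hi le_rfl
  have hJlt : ∀ x i, i < n-1 → J x i < m := by
    intro x i hi
    rw [hJdef]
    simp only []
    have hle := Nat.findGreatest_le (P := fun k => c x k ≤ s i) m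
    rcases lt_or_eq_of_le hle with h | h
    · exact h
    exfalso
    have hspec := (Nat.findGreatest_eq_iff.1 h).2.1 (by omega)
    rw [hcm x m le_rfl] at hspec
    exact absurd hspec (not_le.2 (hslt1 i hi))
  have hJiff : ∀ x i, i < n-1 → ∀ j0 : ℕ, j0 < m →
      (J x i = j0 ↔ (c x j0 ≤ s i ∧ s i < c x (j0+1))) := by
    intro x i hi j0 hj0
    rw [hJdef]
    simp only []
    rw [Nat.findGreatest_eq_iff]
    constructor
    · rintro ⟨h1, h2, h3⟩
      constructor
      · rcases Nat.eq_zero_or_pos j0 with h | h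
        · rw [h, hc0]; exact hsnn i
        · exact h2 (by omega)
      · by_contra hcon
        push_neg at hcon
        exact h3 (Nat.lt_succ_self j0) (by omega) hcon
    · rintro ⟨h1, h2⟩
      refine ⟨by omega, fun _ => h1, ?_⟩
      intro k hk hkm hck
      have : c x (j0+1) ≤ c x k := hcmono x (by omega)
      linarith
  have key : ∀ x (j0 : Fin m),
      ∑ u : Fin (n-1), (if J x (u:ℕ) = (j0:ℕ) then q u else 0)
        = c x ((j0:ℕ)+1) - c x (j0:ℕ) := by
    intro x j0
    obtain ⟨a, ha⟩ := hsurj (c x (j0:ℕ)) (hcB x _ (le_of_lt j0.2))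
    obtain ⟨b, hb⟩ := hsurj (c x ((j0:ℕ)+1)) (hcB x _ j0.2)
    have hab : (a:ℕ) ≤ (b:ℕ) := by
      by_contra h
      push_neg at h
      have h2 := hmono (show b < a from h)
      rw [ha, hb] at h2
      have h3 := hcmono x (Nat.le_succ (j0:ℕ))
      linarith
    have hconv : ∀ i ∈ Finset.range (n-1),
        (if J x i = (j0:ℕ) then s (i+1) - s i else 0)
          = (if i ∈ Finset.Ico (a:ℕ) (b:ℕ) then s (i+1) - s i else 0) := by
      intro i hi
      rw [Finset.mem_range] at hi
      have hJi := hJiff x i hi (j0:ℕ) j0.2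
      have hsi : s i = f ⟨i, by omega⟩ := hsval i (by omega) (by omega)
      have hiff : (J x i = (j0:ℕ)) ↔ (i ∈ Finset.Ico (a:ℕ) (b:ℕ)) := by
        rw [hJi, Finset.mem_Ico]
        rw [← ha, ← hb, hsi]
        constructor
        · rintro ⟨h1, h2⟩
          constructor
          · exact hmono.le_iff_le.1 h1
          · exact hmono.lt_iff_lt.1 h2
        · rintro ⟨h1, h2⟩
          constructor
          · exact hmono.monotone (show a ≤ (⟨i, by omega⟩ : Fin n) from h1)
          · exact hmono (show (⟨i, by omega⟩ : Fin n) < b from h2)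
      rw [if_congr hiff rfl rfl]
    rw [Fin.sum_univ_eq_sum_range (fun i => if J x i = (j0:ℕ) then s (i+1) - s i else 0) (n-1)]
    rw [Finset.sum_congr rfl hconv]
    rw [Finset.sum_ite_mem]
    have hsub : Finset.range (n-1) ∩ Finset.Ico (a:ℕ) (b:ℕ) = Finset.Ico (a:ℕ) (b:ℕ) := by
      apply Finset.inter_eq_right.2
      intro i hii
      rw [Finset.mem_Ico] at hii
      rw [Finset.mem_range]
      have hbn : (b:ℕ) ≤ n - 1 := by omega
      omega
    rw [hsub]
    rw [Finset.sum_Ico_eq_sub _ hab]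
    rw [Finset.sum_range_sub s, Finset.sum_range_sub s]
    have hsa : s (a:ℕ) = c x (j0:ℕ) := by
      rw [hsval (a:ℕ) (by omega) (by omega)]
      rw [← ha]
    have hsb : s (b:ℕ) = c x ((j0:ℕ)+1) := by
      rw [hsval (b:ℕ) (by omega) (by omega)]
      rw [← hb]
    rw [hsa, hsb]
    ring
  refine ⟨n-1, q, g, by omega, hq0, hq1, ?_⟩
  intro x y
  have hj0 : ∀ u : Fin (n-1), (g u x = y) ↔ (J x (u:ℕ) = ((e.symm y : Fin m) : ℕ)) := by
    intro u
    rw [hgdef]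
    simp only []
    rw [Equiv.apply_eq_iff_eq_symm_apply]
    rw [Fin.ext_iff]
    simp only []
    rw [Nat.mod_eq_of_lt (hJlt x (u:ℕ) u.2)]
  calc ∑ u, (if g u x = y then q u else 0)
      = ∑ u : Fin (n-1), (if J x (u:ℕ) = ((e.symm y : Fin m) : ℕ) then q u else 0) := by
        apply Finset.sum_congr rfl
        intro u _
        rw [if_congr (hj0 u) rfl rfl]
    _ = c x (((e.symm y : Fin m) : ℕ)+1) - c x ((e.symm y : Fin m) : ℕ) := key x (e.symm y)
    _ = r x (e (e.symm y)) := hcstep x (e.symm y)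
    _ = r x y := by rw [Equiv.apply_symm_apply]

/-- **Functional Representation Lemma.** For any pair of jointly distributed random
variables `(X, Y)` taking values in finite sets `𝒳` and `𝒴`, there is a probability
space carrying `(X', Y', U)` such that `(X', Y')` has the same joint distribution as
`(X, Y)`, `U` takes values in a finite set `𝒰` with `|𝒰| ≤ |𝒳|(|𝒴| - 1) + 1`,
`U` is independent of `X'` (i.e. `I(U ; X') = 0`), and `Y'` is a deterministic
function of `(U, X')` (i.e. `H(Y' | (U, X')) = 0`). -/
theorem functional_representation_lemma
    {Ω 𝒳 𝒴 : Type} [MeasurableSpace Ω] (μ : Measure Ω) [IsProbabilityMeasure μ]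
    [Fintype 𝒳] [MeasurableSpace 𝒳] [MeasurableSingletonClass 𝒳]
    [Fintype 𝒴] [MeasurableSpace 𝒴] [MeasurableSingletonClass 𝒴]
    (X : Ω → 𝒳) (Y : Ω → 𝒴) (hX : Measurable X) (hY : Measurable Y) :
    ∃ (Ω' : Type) (_ : MeasurableSpace Ω') (μ' : Measure Ω')
      (𝒰 : Type) (_ : Fintype 𝒰) (_ : MeasurableSpace 𝒰)
      (X' : Ω' → 𝒳) (Y' : Ω' → 𝒴) (U : Ω' → 𝒰),
      IsProbabilityMeasure μ' ∧
      Measurable X' ∧ Measurable Y' ∧ Measurable U ∧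
      IdentDistrib (fun ω => (X ω, Y ω)) (fun ω => (X' ω, Y' ω)) μ μ' ∧
      Fintype.card 𝒰 ≤ Fintype.card 𝒳 * (Fintype.card 𝒴 - 1) + 1 ∧
      mutInf μ' U X' = 0 ∧
      condEnt μ' Y' (fun ω => (U ω, X' ω)) = 0 := by
  classical
  have hΩ : Nonempty Ω := by
    by_contra h
    rw [not_nonempty_iff] at h
    have h1 : (μ Set.univ) = 1 := measure_univ
    have h2 : (Set.univ : Set Ω) = ∅ := Set.univ_eq_empty_iff.2 h
    rw [h2, measure_empty] at h1
    exact zero_ne_one h1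
  have hne𝒴 : Nonempty 𝒴 := ⟨Y (Classical.arbitrary Ω)⟩
  have hne𝒳 : Nonempty 𝒳 := ⟨X (Classical.arbitrary Ω)⟩
  set XY := fun ω => (X ω, Y ω) with hXYdef
  have hXY : Measurable XY := hX.prodMk hY
  set px : 𝒳 → ℝ := fun x => (μ (X ⁻¹' {x})).toReal with hpxdef
  set pxy : 𝒳 → 𝒴 → ℝ := fun x y => (μ (XY ⁻¹' {(x,y)})).toReal with hpxydef
  set r : 𝒳 → 𝒴 → ℝ := fun x y =>
    if px x = 0 then (if y = Classical.arbitrary 𝒴 then 1 else 0) else pxy x y / px x with hrdef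
  have hfin : ∀ (S : Set Ω), μ S ≠ ⊤ := fun S => measure_ne_top μ S
  have hdec : ∀ x, ∑ y, μ (XY ⁻¹' {(x,y)}) = μ (X ⁻¹' {x}) := by
    intro x
    rw [← measure_biUnion_finset]
    · congr 1
      ext ω
      constructor
      · intro hω
        rcases Set.mem_iUnion.1 hω with ⟨y, hy⟩
        rcases Set.mem_iUnion.1 hy with ⟨_, hy2⟩
        have h3 : XY ω = (x, y) := hy2
        have h4 : X ω = x := congrArg Prod.fst h3
        exact h4
      · intro hω
        refine Set.mem_biUnion (Finset.mem_univ (Y ω)) ?_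
        have h4 : X ω = x := hω
        show XY ω = (x, Y ω)
        rw [hXYdef]
        simp [h4]
    · intro y _ y' _ hyy
      apply Set.disjoint_left.2
      intro ω h1 h2
      simp only [Set.mem_preimage, Set.mem_singleton_iff, hXYdef, Prod.mk.injEq] at h1 h2
      exact hyy (h1.2 ▸ h2.2 ▸ rfl)
    · intro y _
      exact hXY (measurableSet_singleton _)
  have hdecU : ∑ x, μ (X ⁻¹' {x}) = 1 := by
    have h := measure_biUnion_finset (μ := μ) (s := (Finset.univ : Finset 𝒳))
      (f := fun x : 𝒳 => X ⁻¹' {x}) ?_ ?_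
    · have hu : (⋃ x ∈ (Finset.univ : Finset 𝒳), X ⁻¹' {x}) = Set.univ := by
        ext ω; simp
      rw [hu, measure_univ] at h
      exact h.symm
    · intro x _ x' _ hxx
      apply Set.disjoint_left.2
      intro ω h1 h2
      simp only [Set.mem_preimage, Set.mem_singleton_iff] at h1 h2
      exact hxx (h1 ▸ h2 ▸ rfl)
    · intro x _
      exact hX (measurableSet_singleton _)
  have hpx0 : ∀ x, 0 ≤ px x := fun x => ENNReal.toReal_nonneg
  have hpxy0 : ∀ x y, 0 ≤ pxy x y := fun x y => ENNReal.toReal_nonneg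
  have hpxysum : ∀ x, ∑ y, pxy x y = px x := by
    intro x
    rw [hpxydef, hpxdef]
    simp only []
    rw [← ENNReal.toReal_sum (fun y _ => hfin _), hdec x]
  have hpxsum : ∑ x, px x = 1 := by
    rw [hpxdef]
    simp only []
    rw [← ENNReal.toReal_sum (fun x _ => hfin _), hdecU]
    simp
  have hr0 : ∀ x y, 0 ≤ r x y := by
    intro x y
    rw [hrdef]
    simp only []
    split_ifs with h1 h2
    · norm_num
    · norm_num
    · exact div_nonneg (hpxy0 x y) (hpx0 x)
  have hr1 : ∀ x, ∑ y, r x y = 1 := by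
    intro x
    rw [hrdef]
    simp only []
    by_cases h : px x = 0
    · simp only [h, if_true, if_pos rfl]
      rw [Finset.sum_ite_eq' Finset.univ (Classical.arbitrary 𝒴) (fun _ => (1:ℝ))]
      simp
    · simp only [h, if_false]
      rw [← Finset.sum_div, hpxysum x, div_self h]
  obtain ⟨N, q, g, hN, hq0, hq1, hg⟩ := exists_coupling r hr0 hr1
  letI : MeasurableSpace (Fin N) := ⊤
  haveI : MeasurableSingletonClass (Fin N) := ⟨fun _ => trivial⟩
  set W : 𝒳 × Fin N → ℝ≥0∞ := fun p => μ (X ⁻¹' {p.1}) * ENNReal.ofReal (q p.2) with hWdef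
  set μ' : Measure (𝒳 × Fin N) := ∑ p : 𝒳 × Fin N, W p • Measure.dirac p with hμ'def
  have hμ'app : ∀ S : Set (𝒳 × Fin N), μ' S = ∑ p : 𝒳 × Fin N, (if p ∈ S then W p else 0) := by
    intro S
    rw [hμ'def]
    rw [Measure.finset_sum_apply]
    apply Finset.sum_congr rfl
    intro p _
    rw [Measure.smul_apply, Measure.dirac_apply' _ ((Set.toFinite S).measurableSet)]
    by_cases h : p ∈ S
    · rw [Set.indicator_of_mem h]
      simp [h]
    · rw [Set.indicator_of_notMem h]
      simp [h]
  have hofReal : ∀ x, μ (X ⁻¹' {x}) = ENNReal.ofReal (px x) :=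
    fun x => (ENNReal.ofReal_toReal (hfin _)).symm
  have hWsum : ∀ a : 𝒳, ∑ u : Fin N, W (a,u) = μ (X ⁻¹' {a}) := by
    intro a
    rw [hWdef]
    simp only []
    rw [← Finset.mul_sum, ← ENNReal.ofReal_sum_of_nonneg (fun u _ => hq0 u), hq1,
      ENNReal.ofReal_one, mul_one]
  have M1 : ∀ x : 𝒳, μ' ((fun p : 𝒳 × Fin N => p.1) ⁻¹' {x}) = ENNReal.ofReal (px x) := by
    intro x
    rw [hμ'app, Fintype.sum_prod_type]
    have hinner : ∀ a : 𝒳, (∑ u : Fin N,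
        if (a,u) ∈ ((fun p : 𝒳 × Fin N => p.1) ⁻¹' {x}) then W (a,u) else 0)
        = (if a = x then ENNReal.ofReal (px x) else 0) := by
      intro a
      have hcond : ∀ u : Fin N, ((a,u) ∈ ((fun p : 𝒳 × Fin N => p.1) ⁻¹' {x})) ↔ a = x := by
        intro u; simp
      by_cases h : a = x
      · subst h
        simp only [hcond, if_pos rfl, if_true]
        rw [hWsum a, hofReal a]
      · simp only [hcond, h, if_false]
        simp
    rw [Finset.sum_congr rfl (fun a _ => hinner a)]
    rw [Finset.sum_ite_eq' Finset.univ x (fun _ => ENNReal.ofReal (px x))]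
    simp
  have M2 : ∀ u : Fin N, μ' ((fun p : 𝒳 × Fin N => p.2) ⁻¹' {u}) = ENNReal.ofReal (q u) := by
    intro u
    rw [hμ'app, Fintype.sum_prod_type]
    have hinner : ∀ a : 𝒳, (∑ v : Fin N,
        if (a,v) ∈ ((fun p : 𝒳 × Fin N => p.2) ⁻¹' {u}) then W (a,v) else 0)
        = μ (X ⁻¹' {a}) * ENNReal.ofReal (q u) := by
      intro a
      have hcond : ∀ v : Fin N, ((a,v) ∈ ((fun p : 𝒳 × Fin N => p.2) ⁻¹' {u})) ↔ v = u := by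
        intro v; simp
      simp only [hcond]
      rw [Finset.sum_ite_eq' Finset.univ u (fun v => W (a,v))]
      simp [hWdef]
    rw [Finset.sum_congr rfl (fun a _ => hinner a)]
    rw [← Finset.sum_mul, hdecU, one_mul]
  have M3 : ∀ (u : Fin N) (x : 𝒳), μ' ((fun p : 𝒳 × Fin N => (p.2, p.1)) ⁻¹' {(u,x)})
      = ENNReal.ofReal (px x * q u) := by
    intro u x
    have hset : ((fun p : 𝒳 × Fin N => (p.2, p.1)) ⁻¹' {(u,x)}) = {(x,u)} := by
      ext ⟨a, v⟩
      simp only [Set.mem_preimage, Set.mem_singleton_iff, Prod.mk.injEq]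
      tauto
    rw [hset, hμ'app]
    simp only [Set.mem_singleton_iff]
    rw [Finset.sum_ite_eq' Finset.univ ((x,u) : 𝒳 × Fin N) W]
    simp only [Finset.mem_univ, if_true]
    rw [hWdef]
    simp only []
    rw [hofReal, ← ENNReal.ofReal_mul (hpx0 x)]
  have M4 : ∀ (x : 𝒳) (y : 𝒴), μ' ((fun p : 𝒳 × Fin N => (p.1, g p.2 p.1)) ⁻¹' {(x,y)})
      = μ (XY ⁻¹' {(x,y)}) := by
    intro x y
    have hmass : μ' ((fun p : 𝒳 × Fin N => (p.1, g p.2 p.1)) ⁻¹' {(x,y)})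
        = μ (X ⁻¹' {x}) * ENNReal.ofReal (r x y) := by
      rw [hμ'app, Fintype.sum_prod_type]
      have hinner : ∀ a : 𝒳, (∑ u : Fin N,
          if (a,u) ∈ ((fun p : 𝒳 × Fin N => (p.1, g p.2 p.1)) ⁻¹' {(x,y)}) then W (a,u) else 0)
          = (if a = x then μ (X ⁻¹' {x}) * ENNReal.ofReal (r x y) else 0) := by
        intro a
        by_cases h : a = x
        · subst h
          have hcond : ∀ u : Fin N,
              ((a,u) ∈ ((fun p : 𝒳 × Fin N => (p.1, g p.2 p.1)) ⁻¹' {(a,y)})) ↔ g u a = y := by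
            intro u; simp [Prod.ext_iff]
          simp only [hcond, if_pos rfl]
          rw [← hg a y]
          rw [ENNReal.ofReal_sum_of_nonneg]
          · rw [Finset.mul_sum]
            apply Finset.sum_congr rfl
            intro u _
            by_cases hgu : g u a = y
            · rw [if_pos hgu, if_pos hgu, hWdef]
            · rw [if_neg hgu, if_neg hgu]
              simp
          · intro u _
            by_cases hgu : g u a = y
            · rw [if_pos hgu]; exact hq0 u
            · rw [if_neg hgu]
        · have hcond : ∀ u : Fin N,
              ((a,u) ∈ ((fun p : 𝒳 × Fin N => (p.1, g p.2 p.1)) ⁻¹' {(x,y)})) ↔ False := by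
            intro u
            simp only [Set.mem_preimage, Set.mem_singleton_iff, Prod.mk.injEq, iff_false, not_and]
            intro hax
            exact absurd hax h
          simp only [hcond, if_false, Finset.sum_const_zero, if_neg h]
      rw [Finset.sum_congr rfl (fun a _ => hinner a)]
      rw [Finset.sum_ite_eq' Finset.univ x (fun _ => μ (X ⁻¹' {x}) * ENNReal.ofReal (r x y))]
      simp
    rw [hmass]
    by_cases h : px x = 0
    · have hz : μ (X ⁻¹' {x}) = 0 := by
        rw [hofReal x, h]; simp
      have hz2 : μ (XY ⁻¹' {(x,y)}) = 0 := by
        apply le_antisymm _ zero_le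
        rw [← hz]
        apply measure_mono
        intro ω hω
        simp only [Set.mem_preimage, Set.mem_singleton_iff, hXYdef, Prod.mk.injEq] at hω ⊢
        exact hω.1
      rw [hz, hz2, zero_mul]
    · have hrval : r x y = pxy x y / px x := by
        rw [hrdef]; simp only []; rw [if_neg h]
      rw [hrval, hofReal x, ← ENNReal.ofReal_mul (hpx0 x), mul_comm (px x),
        div_mul_cancel₀ _ h]
      rw [hpxydef]
      simp only []
      rw [ENNReal.ofReal_toReal (hfin _)]
  have hprob : IsProbabilityMeasure μ' := by
    constructor
    rw [hμ'app]
    simp only [Set.mem_univ, if_true]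
    rw [Fintype.sum_prod_type]
    rw [Finset.sum_congr rfl (fun a _ => hWsum a), hdecU]
  refine ⟨𝒳 × Fin N, inferInstance, μ', Fin N, inferInstance, inferInstance,
    (fun p => p.1), (fun p => g p.2 p.1), (fun p => p.2),
    hprob, measurable_fst, meas_all _, measurable_snd, ?_, ?_, ?_, ?_⟩
  · refine ⟨hXY.aemeasurable, ((measurable_fst.prodMk (meas_all _)) :
      Measurable (fun p : 𝒳 × Fin N => (p.1, g p.2 p.1))).aemeasurable, ?_⟩
    apply MeasureTheory.Measure.ext_of_singleton
    rintro ⟨x, y⟩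
    rw [Measure.map_apply hXY (measurableSet_singleton _),
      Measure.map_apply (meas_all _) (measurableSet_singleton _)]
    exact (M4 x y).symm
  · simpa using hN
  · have hEU : ent μ' (fun p : 𝒳 × Fin N => p.2) = ∑ u, -(q u * Real.logb 2 (q u)) := by
      rw [ent]
      apply Finset.sum_congr rfl
      intro u _
      rw [M2 u, ENNReal.toReal_ofReal (hq0 u)]
    have hEX : ent μ' (fun p : 𝒳 × Fin N => p.1) = ∑ x, -(px x * Real.logb 2 (px x)) := by
      rw [ent]
      apply Finset.sum_congr rfl
      intro x _
      rw [M1 x, ENNReal.toReal_ofReal (hpx0 x)]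
    have hEP : ent μ' (fun p : 𝒳 × Fin N => (p.2, p.1))
        = (∑ x, -(px x * Real.logb 2 (px x))) + (∑ u, -(q u * Real.logb 2 (q u))) := by
      rw [ent]
      have h1 : ∀ t : Fin N × 𝒳,
          -((μ' ((fun p : 𝒳 × Fin N => (p.2, p.1)) ⁻¹' {t})).toReal
            * Real.logb 2 ((μ' ((fun p : 𝒳 × Fin N => (p.2, p.1)) ⁻¹' {t})).toReal))
          = q t.1 * (-(px t.2 * Real.logb 2 (px t.2)))
            + px t.2 * (-(q t.1 * Real.logb 2 (q t.1))) := by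
        rintro ⟨u, x⟩
        rw [M3 u x, ENNReal.toReal_ofReal (mul_nonneg (hpx0 x) (hq0 u))]
        simp only []
        rw [mul_logb_mul (px x) (q u)]
        ring
      rw [Finset.sum_congr rfl (fun t _ => h1 t)]
      rw [Finset.sum_add_distrib]
      have h2 : ∑ t : Fin N × 𝒳, q t.1 * (-(px t.2 * Real.logb 2 (px t.2)))
          = ∑ x, -(px x * Real.logb 2 (px x)) := by
        rw [Fintype.sum_prod_type]
        have h21 : ∀ u : Fin N, ∑ x, q u * (-(px x * Real.logb 2 (px x)))
            = q u * ∑ x, -(px x * Real.logb 2 (px x)) := fun u => (Finset.mul_sum _ _ _).symm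
        rw [Finset.sum_congr rfl (fun u _ => h21 u)]
        rw [← Finset.sum_mul, hq1, one_mul]
      have h3 : ∑ t : Fin N × 𝒳, px t.2 * (-(q t.1 * Real.logb 2 (q t.1)))
          = ∑ u, -(q u * Real.logb 2 (q u)) := by
        rw [Fintype.sum_prod_type]
        have h31 : ∀ u : Fin N, ∑ x, px x * (-(q u * Real.logb 2 (q u)))
            = (∑ x, px x) * (-(q u * Real.logb 2 (q u))) := fun u => (Finset.sum_mul _ _ _).symm
        rw [Finset.sum_congr rfl (fun u _ => h31 u)]
        rw [hpxsum]
        simp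
      rw [h2, h3]
    show ent μ' (fun p : 𝒳 × Fin N => p.2) + ent μ' (fun p : 𝒳 × Fin N => p.1)
      - ent μ' (fun p : 𝒳 × Fin N => (p.2, p.1)) = 0
    rw [hEU, hEX, hEP]
    ring
  · have h := ent_pair_fun (μ := μ') (Z := fun p : 𝒳 × Fin N => (p.2, p.1))
      (F := fun z : Fin N × 𝒳 => g z.1 z.2)
    show ent μ' (fun p : 𝒳 × Fin N => (g p.2 p.1, (p.2, p.1)))
      - ent μ' (fun p : 𝒳 × Fin N => (p.2, p.1)) = 0
    rw [sub_eq_zero]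
    exact h
end

section
/- Extended Functional Representation Lemma: For any pair of jointly distributed random variables (X,Y) taking values in finite sets 𝒳 and 𝒴, and any real ε with 0 ≤ ε < I(X;Y), there exists a probability space carrying random variables (X',Y',U) such that (X',Y') has the same joint distribution as (X,Y), U takes values in a finite set 𝒰 with |𝒰| ≤ (|𝒳|(|𝒴|−1)+1)·(|𝒳|+1), the leakage satisfies I(U;X') = ε exactly, and Y' is a deterministic function of (U,X') (H(Y'|U,X')=0). -/
open MeasureTheory ProbabilityTheory

namespace EFRL

noncomputable def H2 {α : Type*} [Fintype α] (w : α → ℝ) : ℝ :=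
  ∑ a, Real.negMulLog (w a) / Real.log 2

lemma neg_mul_logb (t : ℝ) : -(t * Real.logb 2 t) = Real.negMulLog t / Real.log 2 := by
  rw [Real.logb, Real.negMulLog]; ring

lemma ent_eq_H2 {Ω α : Type*} [MeasurableSpace Ω] [Fintype α] (μ : Measure Ω) (T : Ω → α) :
    ent μ T = H2 (fun a => (μ (T ⁻¹' {a})).toReal) := by
  unfold ent H2; exact Finset.sum_congr rfl fun a _ => neg_mul_logb _

lemma ent_comp_inj {Ω α β : Type*} [MeasurableSpace Ω] [Fintype α] [Fintype β]
    (μ : Measure Ω) (T : Ω → α) {j : α → β} (hj : Function.Injective j) :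
    ent μ (fun ω => j (T ω)) = ent μ T := by
  classical
  unfold ent
  rw [← Finset.sum_subset (Finset.subset_univ (Finset.univ.image j))]
  · rw [Finset.sum_image (fun a _ b _ h => hj h)]
    refine Finset.sum_congr rfl fun a _ => ?_
    have h1 : (fun ω => j (T ω)) ⁻¹' {j a} = T ⁻¹' {a} := by
      ext ω; simp [hj.eq_iff]
    rw [h1]
  · intro b _ hb
    have h0 : (fun ω => j (T ω)) ⁻¹' {b} = ∅ := by
      ext ω
      simp only [Set.mem_preimage, Set.mem_singleton_iff, Set.mem_empty_iff_false, iff_false]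
      intro h; exact hb (Finset.mem_image.mpr ⟨T ω, Finset.mem_univ _, h⟩)
    simp [h0]

lemma measure_preimage_fst {Ω 𝒳 𝒴 : Type*} [MeasurableSpace Ω] [Fintype 𝒴]
    [MeasurableSpace 𝒳] [MeasurableSingletonClass 𝒳]
    [MeasurableSpace 𝒴] [MeasurableSingletonClass 𝒴]
    (μ : Measure Ω) (X : Ω → 𝒳) (Y : Ω → 𝒴) (hX : Measurable X) (hY : Measurable Y) (x : 𝒳) :
    μ (X ⁻¹' {x}) = ∑ y, μ ((fun ω => (X ω, Y ω)) ⁻¹' {(x, y)}) := by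
  classical
  have hset : X ⁻¹' {x} = ⋃ y ∈ (Finset.univ : Finset 𝒴),
      (fun ω => (X ω, Y ω)) ⁻¹' {(x, y)} := by
    ext ω; simp [Prod.ext_iff]
  rw [hset, measure_biUnion_finset]
  · intro y _ y' _ hyy'
    simp only [Function.onFun, Set.disjoint_left]
    intro ω h1 h2
    simp only [Set.mem_preimage, Set.mem_singleton_iff, Prod.mk.injEq] at h1 h2
    exact hyy' (h1.2 ▸ h2.2)
  · intro y _
    have : (fun ω => (X ω, Y ω)) ⁻¹' {(x, y)} = X ⁻¹' {x} ∩ Y ⁻¹' {y} := by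
      ext ω; simp [Prod.ext_iff]
    rw [this]
    exact (hX (measurableSet_singleton x)).inter (hY (measurableSet_singleton y))

lemma measure_preimage_snd {Ω 𝒳 𝒴 : Type*} [MeasurableSpace Ω] [Fintype 𝒳]
    [MeasurableSpace 𝒳] [MeasurableSingletonClass 𝒳]
    [MeasurableSpace 𝒴] [MeasurableSingletonClass 𝒴]
    (μ : Measure Ω) (X : Ω → 𝒳) (Y : Ω → 𝒴) (hX : Measurable X) (hY : Measurable Y) (y : 𝒴) :
    μ (Y ⁻¹' {y}) = ∑ x, μ ((fun ω => (X ω, Y ω)) ⁻¹' {(x, y)}) := by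
  classical
  have hset : Y ⁻¹' {y} = ⋃ x ∈ (Finset.univ : Finset 𝒳),
      (fun ω => (X ω, Y ω)) ⁻¹' {(x, y)} := by
    ext ω; simp [Prod.ext_iff]
  rw [hset, measure_biUnion_finset]
  · intro x _ x' _ hxx'
    simp only [Function.onFun, Set.disjoint_left]
    intro ω h1 h2
    simp only [Set.mem_preimage, Set.mem_singleton_iff, Prod.mk.injEq] at h1 h2
    exact hxx' (h1.1 ▸ h2.1)
  · intro x _
    have : (fun ω => (X ω, Y ω)) ⁻¹' {(x, y)} = X ⁻¹' {x} ∩ Y ⁻¹' {y} := by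
      ext ω; simp [Prod.ext_iff]
    rw [this]
    exact (hX (measurableSet_singleton x)).inter (hY (measurableSet_singleton y))

lemma sum_negMulLog_mul {α β : Type*} [Fintype α] [Fintype β] (p : α → ℝ) (q : β → ℝ)
    (hp : ∑ a, p a = 1) (hq : ∑ b, q b = 1) :
    ∑ a, ∑ b, Real.negMulLog (p a * q b)
      = ∑ a, Real.negMulLog (p a) + ∑ b, Real.negMulLog (q b) := by
  have : ∀ a, ∑ b, Real.negMulLog (p a * q b)
      = Real.negMulLog (p a) + p a * ∑ b, Real.negMulLog (q b) := by
    intro a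
    simp only [Real.negMulLog_mul, Finset.sum_add_distrib, ← Finset.sum_mul, ← Finset.mul_sum, hq]
    ring
  simp only [this, Finset.sum_add_distrib, ← Finset.sum_mul, hp]
  ring

section Disc
variable {Ω' : Type*} [Fintype Ω'] [MeasurableSpace Ω']

noncomputable def discMeasure (w : Ω' → ℝ) : Measure Ω' :=
  Measure.sum (fun ω => ENNReal.ofReal (w ω) • Measure.dirac ω)

lemma discMeasure_apply (hms : ∀ s : Set Ω', MeasurableSet s) (w : Ω' → ℝ) (s : Set Ω')
    [DecidablePred (· ∈ s)] :
    discMeasure w s = ∑ ω ∈ Finset.univ.filter (fun ω => ω ∈ s), ENNReal.ofReal (w ω) := by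
  rw [discMeasure, Measure.sum_apply _ (hms s), tsum_fintype, Finset.sum_filter]
  refine Finset.sum_congr rfl fun ω _ => ?_
  rw [Measure.smul_apply, Measure.dirac_apply' _ (hms s), smul_eq_mul]
  by_cases h : ω ∈ s <;> simp [h]

lemma discMeasure_preimage (hms : ∀ s : Set Ω', MeasurableSet s) (w : Ω' → ℝ)
    (hw : ∀ ω, 0 ≤ w ω) {α : Type*} [DecidableEq α] (T : Ω' → α) (a : α) :
    discMeasure w (T ⁻¹' {a})
      = ENNReal.ofReal (∑ ω ∈ Finset.univ.filter (fun ω => T ω = a), w ω) := by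
  classical
  rw [discMeasure_apply hms, ENNReal.ofReal_sum_of_nonneg (fun ω _ => hw ω)]
  congr 1
  apply Finset.filter_congr
  intro ω _
  simp

lemma discMeasure_univ (hms : ∀ s : Set Ω', MeasurableSet s) (w : Ω' → ℝ)
    (hw : ∀ ω, 0 ≤ w ω) (hw1 : ∑ ω, w ω = 1) :
    IsProbabilityMeasure (discMeasure w) := by
  classical
  constructor
  rw [discMeasure_apply hms]
  simp only [Set.mem_univ, Finset.filter_true]
  rw [← ENNReal.ofReal_sum_of_nonneg (fun ω _ => hw ω), hw1, ENNReal.ofReal_one]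

lemma ent_discMeasure (hms : ∀ s : Set Ω', MeasurableSet s) (w : Ω' → ℝ)
    (hw : ∀ ω, 0 ≤ w ω) {α : Type*} [Fintype α] [DecidableEq α] (T : Ω' → α) :
    ent (discMeasure w) T
      = H2 (fun a => ∑ ω ∈ Finset.univ.filter (fun ω => T ω = a), w ω) := by
  classical
  rw [ent_eq_H2]
  unfold H2
  refine Finset.sum_congr rfl fun a _ => ?_
  dsimp only
  rw [discMeasure_preimage hms w hw, ENNReal.toReal_ofReal (Finset.sum_nonneg fun ω _ => hw ω)]

end Disc

lemma list_sum_map_eq {α M : Type*} [AddCommMonoid M] (L : List α) (g : α → M) :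
    (L.map g).sum = ∑ i : Fin L.length, g (L.get i) := by
  rw [Fin.sum_univ_def]
  conv_lhs => rw [← List.map_get_finRange L]
  rw [List.map_map]
  rfl

lemma channel_decomp {𝒳 𝒴 : Type*} [Fintype 𝒳] [Fintype 𝒴] [Nonempty 𝒳] [DecidableEq 𝒴]
    (n : ℕ) (W : 𝒳 → 𝒴 → ℝ) (s : ℝ)
    (hW : ∀ x y, 0 ≤ W x y) (hrow : ∀ x, ∑ y, W x y = s)
    (hn : (Finset.univ.filter (fun p : 𝒳 × 𝒴 => W p.1 p.2 ≠ 0)).card ≤ n) :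
    ∃ L : List (ℝ × (𝒳 → 𝒴)),
      L.length ≤ n + 1 - Fintype.card 𝒳 ∧
      (∀ e ∈ L, 0 ≤ e.1) ∧
      (L.map Prod.fst).sum = s ∧
      ∀ x y, W x y = (L.map (fun e => if e.2 x = y then e.1 else 0)).sum := by
  classical
  induction n using Nat.strong_induction_on generalizing W s with
  | _ n ih =>
  by_cases hs : s = 0
  · refine ⟨[], by simp, by simp, by simp [hs], fun x y => ?_⟩
    have h0 : W x y = 0 := by
      have h := hrow x
      rw [hs] at h
      exact (Finset.sum_eq_zero_iff_of_nonneg (fun y _ => hW x y)).mp h y (Finset.mem_univ y)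
    simp [h0]
  · have hspos : 0 < s := by
      have := hrow (Classical.arbitrary 𝒳)
      have hnn : 0 ≤ s := this ▸ Finset.sum_nonneg fun y _ => hW _ y
      exact lt_of_le_of_ne hnn (Ne.symm hs)
    have hex : ∀ x : 𝒳, ∃ y, 0 < W x y := by
      intro x
      by_contra h
      push_neg at h
      have : ∑ y, W x y = 0 :=
        Finset.sum_eq_zero fun y _ => le_antisymm (h y) (hW x y)
      rw [hrow x] at this
      exact hs this
    choose f hf using hex
    set t := Finset.univ.inf' Finset.univ_nonempty (fun x => W x (f x)) with ht
    obtain ⟨x₀, -, hx₀⟩ := Finset.exists_mem_eq_inf' Finset.univ_nonempty (fun x => W x (f x))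
    have htpos : 0 < t := by rw [ht, hx₀]; exact hf x₀
    have htle : ∀ x, t ≤ W x (f x) := fun x => Finset.inf'_le _ (Finset.mem_univ x)
    have hts : t ≤ s := by
      calc t ≤ W x₀ (f x₀) := htle x₀
        _ ≤ ∑ y, W x₀ y := Finset.single_le_sum (fun y _ => hW x₀ y) (Finset.mem_univ _)
        _ = s := hrow x₀
    set W' : 𝒳 → 𝒴 → ℝ := fun x y => W x y - (if f x = y then t else 0) with hW'def
    have hW'nn : ∀ x y, 0 ≤ W' x y := by
      intro x y
      by_cases h : f x = y
      · have := htle x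
        rw [h] at this
        simp only [hW'def, h, if_pos]
        linarith
      · simp [hW'def, h, hW x y]
    have hW'row : ∀ x, ∑ y, W' x y = s - t := by
      intro x
      simp only [hW'def, Finset.sum_sub_distrib, hrow x, Finset.sum_ite_eq, Finset.mem_univ,
        if_pos]
    have hsub : Finset.univ.filter (fun p : 𝒳 × 𝒴 => W' p.1 p.2 ≠ 0)
        ⊆ Finset.univ.filter (fun p : 𝒳 × 𝒴 => W p.1 p.2 ≠ 0) := by
      intro p hp
      simp only [Finset.mem_filter, Finset.mem_univ, true_and] at hp ⊢
      intro h
      apply hp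
      have h1 := hW'nn p.1 p.2
      simp only [hW'def, h, zero_sub] at h1 ⊢
      by_cases hc : f p.1 = p.2
      · rw [if_pos hc] at h1; linarith
      · rw [if_neg hc]; ring
    have hmemW : (x₀, f x₀) ∈ Finset.univ.filter (fun p : 𝒳 × 𝒴 => W p.1 p.2 ≠ 0) := by
      simp only [Finset.mem_filter, Finset.mem_univ, true_and]
      exact ne_of_gt (hf x₀)
    have hmemW' : (x₀, f x₀) ∉ Finset.univ.filter (fun p : 𝒳 × 𝒴 => W' p.1 p.2 ≠ 0) := by
      simp only [Finset.mem_filter, Finset.mem_univ, true_and, not_not, hW'def]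
      simp only [if_true]
      rw [ht, hx₀]; ring
    have hcardlt : (Finset.univ.filter (fun p : 𝒳 × 𝒴 => W' p.1 p.2 ≠ 0)).card
        < (Finset.univ.filter (fun p : 𝒳 × 𝒴 => W p.1 p.2 ≠ 0)).card :=
      Finset.card_lt_card (Finset.ssubset_iff_of_subset hsub |>.mpr ⟨_, hmemW, hmemW'⟩)
    have hcardX : Fintype.card 𝒳
        ≤ (Finset.univ.filter (fun p : 𝒳 × 𝒴 => W p.1 p.2 ≠ 0)).card := by
      have hmem : ∀ x : 𝒳, (x, f x) ∈ Finset.univ.filter (fun p : 𝒳 × 𝒴 => W p.1 p.2 ≠ 0) := by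
        intro x
        simp only [Finset.mem_filter, Finset.mem_univ, true_and]
        exact ne_of_gt (hf x)
      calc Fintype.card 𝒳 = (Finset.univ : Finset 𝒳).card := rfl
        _ ≤ _ := Finset.card_le_card_of_injOn (fun x => (x, f x)) (fun x _ => hmem x)
            (fun a _ b _ h => congrArg Prod.fst h)
    have hcardpos : 0 < (Finset.univ.filter (fun p : 𝒳 × 𝒴 => W p.1 p.2 ≠ 0)).card :=
      Finset.card_pos.mpr ⟨_, hmemW⟩
    have hn1 : 1 ≤ n := le_trans hcardpos hn
    obtain ⟨L', hlen', hnn', hsum', hdec'⟩ := ih (n - 1) (by omega) W' (s - t) hW'nn hW'row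
      (by omega)
    refine ⟨(t, f) :: L', ?_, ?_, ?_, ?_⟩
    · simp only [List.length_cons]
      have hXn : Fintype.card 𝒳 ≤ n := le_trans hcardX hn
      omega
    · intro e he
      rcases List.mem_cons.mp he with h | h
      · rw [h]; exact le_of_lt htpos
      · exact hnn' e h
    · simp only [List.map_cons, List.sum_cons, hsum']; ring
    · intro x y
      simp only [List.map_cons, List.sum_cons, ← hdec' x y, hW'def]
      by_cases h : f x = y <;> simp [h]

end EFRL

/-- **Extended Functional Representation Lemma.** For any pair of jointly distributed
random variables `(X, Y)` with values in finite sets `𝒳`, `𝒴`, and any real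
`0 ≤ ε < I(X ; Y)`, there is a probability space carrying `(X', Y', U)` such that
`(X', Y')` has the same joint distribution as `(X, Y)`, `U` takes values in a finite
set `𝒰` with `|𝒰| ≤ (|𝒳|(|𝒴| - 1) + 1)(|𝒳| + 1)`, the leakage satisfies
`I(U ; X') = ε`, and `H(Y' | (U, X')) = 0`. -/
theorem extended_functional_representation_lemma
    {Ω 𝒳 𝒴 : Type} [MeasurableSpace Ω] (μ : Measure Ω) [IsProbabilityMeasure μ]
    [Fintype 𝒳] [MeasurableSpace 𝒳] [MeasurableSingletonClass 𝒳]
    [Fintype 𝒴] [MeasurableSpace 𝒴] [MeasurableSingletonClass 𝒴]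
    (X : Ω → 𝒳) (Y : Ω → 𝒴) (hX : Measurable X) (hY : Measurable Y)
    (ε : ℝ) (hε0 : 0 ≤ ε) (hε1 : ε < mutInf μ X Y) :
    ∃ (Ω' : Type) (_ : MeasurableSpace Ω') (μ' : Measure Ω')
      (𝒰 : Type) (_ : Fintype 𝒰) (_ : MeasurableSpace 𝒰)
      (X' : Ω' → 𝒳) (Y' : Ω' → 𝒴) (U : Ω' → 𝒰),
      IsProbabilityMeasure μ' ∧
      Measurable X' ∧ Measurable Y' ∧ Measurable U ∧
      IdentDistrib (fun ω => (X ω, Y ω)) (fun ω => (X' ω, Y' ω)) μ μ' ∧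
      Fintype.card 𝒰 ≤ (Fintype.card 𝒳 * (Fintype.card 𝒴 - 1) + 1) * (Fintype.card 𝒳 + 1) ∧
      mutInf μ' U X' = ε ∧
      condEnt μ' Y' (fun ω => (U ω, X' ω)) = 0 := by
  classical
  have hΩ : Nonempty Ω := by
    by_contra h
    have h1 : (Set.univ : Set Ω) = ∅ := Set.univ_eq_empty_iff.mpr (not_nonempty_iff.mp h)
    have h2 : μ Set.univ = 1 := measure_univ
    rw [h1] at h2
    simp at h2
  have hXne : Nonempty 𝒳 := ⟨X (Classical.arbitrary Ω)⟩
  have hYne : Nonempty 𝒴 := ⟨Y (Classical.arbitrary Ω)⟩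
  have hpairMeas : Measurable (fun ω => (X ω, Y ω)) := hX.prodMk hY
  set P : 𝒳 × 𝒴 → ℝ := fun z => (μ ((fun ω => (X ω, Y ω)) ⁻¹' {z})).toReal with hPdef
  have hPnn : ∀ z, 0 ≤ P z := fun z => ENNReal.toReal_nonneg
  have hPof : ∀ z, ENNReal.ofReal (P z) = μ ((fun ω => (X ω, Y ω)) ⁻¹' {z}) :=
    fun z => ENNReal.ofReal_toReal (measure_ne_top μ _)
  have hPsum : ∑ z, P z = 1 := by
    have h1 : ∑ z : 𝒳 × 𝒴, μ ((fun ω => (X ω, Y ω)) ⁻¹' {z}) = 1 := by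
      rw [MeasureTheory.sum_measure_preimage_singleton Finset.univ
        (fun z _ => hpairMeas (measurableSet_singleton z))]
      simp
    calc ∑ z, P z = (∑ z : 𝒳 × 𝒴, μ ((fun ω => (X ω, Y ω)) ⁻¹' {z})).toReal :=
          (ENNReal.toReal_sum (fun z _ => measure_ne_top μ _)).symm
      _ = 1 := by rw [h1]; simp
  set Px : 𝒳 → ℝ := fun x => ∑ y, P (x, y) with hPxdef
  set Py : 𝒴 → ℝ := fun y => ∑ x, P (x, y) with hPydef
  have hPxnn : ∀ x, 0 ≤ Px x := fun x => Finset.sum_nonneg fun y _ => hPnn _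
  have hPxsum : ∑ x, Px x = 1 := by rw [← hPsum, Fintype.sum_prod_type]
  have hPysum : ∑ y, Py y = 1 := by rw [← hPsum, Fintype.sum_prod_type_right]
  have hentX : ent μ X = EFRL.H2 Px := by
    rw [EFRL.ent_eq_H2]
    unfold EFRL.H2
    refine Finset.sum_congr rfl fun x _ => ?_
    dsimp only
    rw [EFRL.measure_preimage_fst μ X Y hX hY x,
      ENNReal.toReal_sum (fun y _ => measure_ne_top μ _)]
  have hentY : ent μ Y = EFRL.H2 Py := by
    rw [EFRL.ent_eq_H2]
    unfold EFRL.H2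
    refine Finset.sum_congr rfl fun y _ => ?_
    dsimp only
    rw [EFRL.measure_preimage_snd μ X Y hX hY y,
      ENNReal.toReal_sum (fun x _ => measure_ne_top μ _)]
  have hentXY : ent μ (fun ω => (X ω, Y ω)) = EFRL.H2 P := EFRL.ent_eq_H2 μ _
  -- the channel W(y|x)
  obtain ⟨y₀⟩ := hYne
  set W : 𝒳 → 𝒴 → ℝ := fun x y => if Px x = 0 then (if y = y₀ then 1 else 0)
    else P (x, y) / Px x with hWdef
  have hWnn : ∀ x y, 0 ≤ W x y := by
    intro x y
    by_cases h : Px x = 0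
    · simp only [hWdef, h, if_true]
      split <;> norm_num
    · simp only [hWdef, h, if_false]
      exact div_nonneg (hPnn _) (hPxnn x)
  have hWrow : ∀ x, ∑ y, W x y = 1 := by
    intro x
    by_cases h : Px x = 0
    · simp [hWdef, h]
    · simp only [hWdef, h, if_false]
      rw [← Finset.sum_div]
      rw [show ∑ y, P (x, y) = Px x from rfl]
      field_simp
  have hPxW : ∀ x y, Px x * W x y = P (x, y) := by
    intro x y
    by_cases h : Px x = 0
    · rw [h, zero_mul]
      have h2 : ∑ y, P (x, y) = 0 := h
      exact ((Finset.sum_eq_zero_iff_of_nonneg (fun y _ => hPnn (x, y))).mp h2 y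
        (Finset.mem_univ y)).symm
    · simp only [hWdef, h, if_false]
      field_simp
  obtain ⟨L, hLlen, hLnn, hLsum, hLdec⟩ := EFRL.channel_decomp
    (Fintype.card 𝒳 * Fintype.card 𝒴) W 1 hWnn hWrow
    (by
      calc (Finset.univ.filter (fun p : 𝒳 × 𝒴 => W p.1 p.2 ≠ 0)).card
          ≤ (Finset.univ : Finset (𝒳 × 𝒴)).card := Finset.card_filter_le _ _
        _ = Fintype.card (𝒳 × 𝒴) := rfl
        _ = Fintype.card 𝒳 * Fintype.card 𝒴 := Fintype.card_prod 𝒳 𝒴)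
  set K := L.length with hKdef
  set q : Fin K → ℝ := fun i => (L.get i).1 with hqdef
  set f : Fin K → 𝒳 → 𝒴 := fun i => (L.get i).2 with hfdef
  have hqnn : ∀ i, 0 ≤ q i := fun i => hLnn _ (L.get_mem i)
  have hqsum : ∑ i, q i = 1 := by
    rw [← hLsum, EFRL.list_sum_map_eq]
  have hWq : ∀ x y, W x y = ∑ i, if f i x = y then q i else 0 := by
    intro x y
    rw [hLdec x y, EFRL.list_sum_map_eq]
  -- the construction
  set 𝒰 : Type := 𝒴 ⊕ Fin K with h𝒰def
  set Ω' : Type := 𝒳 × 𝒰 with hΩ'def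
  letI : MeasurableSpace Ω' := ⊤
  letI : MeasurableSpace 𝒰 := ⊤
  have hms : ∀ s : Set Ω', MeasurableSet s := fun _ => trivial
  set w : ℝ → Ω' → ℝ := fun l p =>
    Sum.elim (fun y => l * P (p.1, y)) (fun i => (1 - l) * (Px p.1 * q i)) p.2 with hwdef
  set Y' : Ω' → 𝒴 := fun p => Sum.elim (fun y => y) (fun i => f i p.1) p.2 with hY'def
  set mU : ℝ → 𝒰 → ℝ := fun l => Sum.elim (fun y => l * Py y) (fun i => (1 - l) * q i)
    with hmUdef
  -- mass computations
  have hrowsum : ∀ l x, ∑ m : 𝒰, w l (x, m) = Px x := by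
    intro l x
    rw [Fintype.sum_sum_type]
    simp only [hwdef, Sum.elim_inl, Sum.elim_inr]
    rw [← Finset.mul_sum, ← Finset.mul_sum, ← Finset.mul_sum, hqsum,
      show ∑ y, P (x, y) = Px x from rfl]
    ring
  have hwsum : ∀ l, ∑ p, w l p = 1 := by
    intro l
    rw [Fintype.sum_prod_type]
    simp only [hrowsum l]
    exact hPxsum
  have hmassU : ∀ (l : ℝ) (m : 𝒰),
      ∑ p ∈ Finset.univ.filter (fun p : Ω' => p.2 = m), w l p = mU l m := by
    intro l m
    rw [Finset.sum_filter, Fintype.sum_prod_type]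
    have h1 : ∀ x : 𝒳, ∑ mm : 𝒰, (if mm = m then w l (x, mm) else 0) = w l (x, m) := by
      intro x
      rw [Finset.sum_ite_eq' Finset.univ m (fun mm => w l (x, mm))]
      simp
    simp only [h1]
    rcases m with y | i
    · simp only [hwdef, hmUdef, Sum.elim_inl, ← Finset.sum_mul, ← Finset.mul_sum]
      try rw [show ∑ x, P (x, y) = Py y from rfl]
    · simp only [hwdef, hmUdef, Sum.elim_inr, ← Finset.mul_sum]
      rw [← Finset.sum_mul, hPxsum]
      ring
  have hmassX : ∀ (l : ℝ) (x : 𝒳),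
      ∑ p ∈ Finset.univ.filter (fun p : Ω' => p.1 = x), w l p = Px x := by
    intro l x
    rw [Finset.sum_filter, Fintype.sum_prod_type]
    have h1 : ∀ x' : 𝒳, ∑ mm : 𝒰, (if x' = x then w l (x', mm) else 0)
        = if x' = x then Px x' else 0 := by
      intro x'
      by_cases h : x' = x
      · simp only [h, if_true]; exact hrowsum l x
      · simp [h]
    simp only [h1, Finset.sum_ite_eq' Finset.univ x (fun x' => Px x'), Finset.mem_univ, if_true]
  have hmassUX : ∀ (l : ℝ) (z : 𝒰 × 𝒳),
      ∑ p ∈ Finset.univ.filter (fun p : Ω' => (p.2, p.1) = z), w l p = w l (z.2, z.1) := by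
    intro l z
    rw [Finset.sum_filter]
    have h1 : ∀ p : Ω', ((p.2, p.1) = z) = (p = (z.2, z.1)) := by
      intro p
      apply propext
      constructor
      · intro h
        exact Prod.ext_iff.mpr ⟨by simpa using congrArg Prod.snd h,
          by simpa using congrArg Prod.fst h⟩
      · intro h; subst h; rfl
    simp only [h1]
    rw [Finset.sum_ite_eq' Finset.univ (z.2, z.1) (w l)]
    simp
  have hmassXY : ∀ (l : ℝ) (z : 𝒳 × 𝒴),
      ∑ p ∈ Finset.univ.filter (fun p : Ω' => (p.1, Y' p) = z), w l p = P z := by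
    intro l z
    obtain ⟨x, y⟩ := z
    rw [Finset.sum_filter, Fintype.sum_prod_type]
    have h1 : ∀ x' : 𝒳,
        ∑ mm : 𝒰, (if (((x', mm) : Ω').1, Y' (x', mm)) = (x, y) then w l (x', mm) else 0)
        = if x' = x then l * P (x, y) + (1 - l) * (Px x * W x y) else 0 := by
      intro x'
      by_cases h : x' = x
      · subst h
        rw [Fintype.sum_sum_type]
        simp only [hY'def, hwdef, Sum.elim_inl, Sum.elim_inr, Prod.mk.injEq,
          true_and, if_true]
        congr 1
        · rw [Finset.sum_ite_eq' Finset.univ y (fun y' => l * P (x', y'))]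
          simp
        · rw [hWq x' y, Finset.mul_sum, Finset.mul_sum]
          refine Finset.sum_congr rfl fun i _ => ?_
          by_cases hc : f i x' = y <;> simp [hc] <;> ring
      · rw [Fintype.sum_sum_type]
        simp only [hY'def, hwdef, Sum.elim_inl, Sum.elim_inr, Prod.mk.injEq, h,
          false_and, if_false]
        simp
    simp only [h1, Finset.sum_ite_eq' Finset.univ x
      (fun x' => l * P (x, y) + (1 - l) * (Px x * W x y)), Finset.mem_univ, if_true]
    rw [hPxW x y]
    ring
  -- the interpolation function
  set Φ : ℝ → ℝ := fun l => EFRL.H2 (mU l) + EFRL.H2 Px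
      - EFRL.H2 (fun z : 𝒰 × 𝒳 => w l (z.2, z.1)) with hΦdef
  have hΦcont : Continuous Φ := by
    rw [hΦdef]
    unfold EFRL.H2
    apply Continuous.sub
    · apply Continuous.add
      · apply continuous_finset_sum
        intro m _
        rcases m with y | i
        · simp only [hmUdef, Sum.elim_inl]
          fun_prop
        · simp only [hmUdef, Sum.elim_inr]
          fun_prop
      · exact continuous_const
    · apply continuous_finset_sum
      intro z _
      obtain ⟨m, x⟩ := z
      rcases m with y | i
      · simp only [hwdef, Sum.elim_inl]
        fun_prop
      · simp only [hwdef, Sum.elim_inr]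
        fun_prop
  have hH2Px : EFRL.H2 Px = (∑ x, Real.negMulLog (Px x)) / Real.log 2 := by
    unfold EFRL.H2; rw [Finset.sum_div]
  have hΦ0 : Φ 0 = 0 := by
    have e1 : EFRL.H2 (mU 0) = (∑ i, Real.negMulLog (q i)) / Real.log 2 := by
      unfold EFRL.H2
      rw [Fintype.sum_sum_type, Finset.sum_div]
      simp [hmUdef]
    have e2 : EFRL.H2 (fun z : 𝒰 × 𝒳 => w 0 (z.2, z.1))
        = (∑ x, Real.negMulLog (Px x) + ∑ i, Real.negMulLog (q i)) / Real.log 2 := by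
      unfold EFRL.H2
      rw [Fintype.sum_prod_type, Fintype.sum_sum_type]
      have hz : ∀ y : 𝒴, ∑ x : 𝒳,
          Real.negMulLog (w 0 (x, Sum.inl y)) / Real.log 2 = 0 := by
        intro y; simp [hwdef]
      have hr : ∀ i : Fin K, ∀ x : 𝒳, w 0 (x, Sum.inr i) = q i * Px x := by
        intro i x; simp [hwdef]; ring
      simp only [hz, hr, Finset.sum_const_zero, zero_add]
      simp only [← Finset.sum_div]
      rw [EFRL.sum_negMulLog_mul q Px hqsum hPxsum]
      ring
    show EFRL.H2 (mU 0) + EFRL.H2 Px - EFRL.H2 (fun z : 𝒰 × 𝒳 => w 0 (z.2, z.1)) = 0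
    rw [e1, e2, hH2Px]
    ring
  have hΦ1 : Φ 1 = mutInf μ X Y := by
    have e1 : EFRL.H2 (mU 1) = EFRL.H2 Py := by
      unfold EFRL.H2
      rw [Fintype.sum_sum_type]
      simp [hmUdef]
    have e2 : EFRL.H2 (fun z : 𝒰 × 𝒳 => w 1 (z.2, z.1)) = EFRL.H2 P := by
      unfold EFRL.H2
      rw [Fintype.sum_prod_type, Fintype.sum_sum_type]
      have hz : ∀ i : Fin K, ∑ x : 𝒳,
          Real.negMulLog (w 1 (x, Sum.inr i)) / Real.log 2 = 0 := by
        intro i; simp [hwdef]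
      have hl : ∀ y : 𝒴, ∀ x : 𝒳, w 1 (x, Sum.inl y) = P (x, y) := by
        intro y x; simp [hwdef]
      simp only [hz, hl, Finset.sum_const_zero, add_zero]
      rw [Fintype.sum_prod_type]
      exact Finset.sum_comm
    show EFRL.H2 (mU 1) + EFRL.H2 Px - EFRL.H2 (fun z : 𝒰 × 𝒳 => w 1 (z.2, z.1)) = mutInf μ X Y
    rw [e1, e2, mutInf, hentX, hentY, hentXY]
    ring
  -- intermediate value theorem
  have hmem : ε ∈ Set.Icc (Φ 0) (Φ 1) := by
    rw [hΦ0, hΦ1]; exact ⟨hε0, le_of_lt hε1⟩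
  obtain ⟨l, hl, hlε⟩ := intermediate_value_Icc zero_le_one hΦcont.continuousOn hmem
  obtain ⟨hl0, hl1⟩ := hl
  have hwnn : ∀ p, 0 ≤ w l p := by
    intro p
    obtain ⟨x, m⟩ := p
    rcases m with y | i
    · simp only [hwdef, Sum.elim_inl]
      exact mul_nonneg hl0 (hPnn _)
    · simp only [hwdef, Sum.elim_inr]
      exact mul_nonneg (by linarith) (mul_nonneg (hPxnn x) (hqnn i))
  -- assemble
  refine ⟨Ω', inferInstance, EFRL.discMeasure (w l), 𝒰, inferInstance, inferInstance,
    Prod.fst, Y', Prod.snd, EFRL.discMeasure_univ hms _ hwnn (hwsum l),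
    fun _ _ => hms _, fun _ _ => hms _, fun _ _ => hms _, ?_, ?_, ?_, ?_⟩
  · -- IdentDistrib
    refine ⟨hpairMeas.aemeasurable, Measurable.aemeasurable (fun _ _ => hms _), ?_⟩
    refine Measure.ext_of_singleton fun z => ?_
    rw [Measure.map_apply hpairMeas (measurableSet_singleton z),
      Measure.map_apply (f := fun ω : Ω' => (Prod.fst ω, Y' ω)) (fun _ _ => hms _)
        (measurableSet_singleton z),
      EFRL.discMeasure_preimage hms _ hwnn (fun ω : Ω' => (Prod.fst ω, Y' ω)) z]
    rw [show (∑ p ∈ Finset.univ.filter (fun p : Ω' => (Prod.fst p, Y' p) = z), w l p) = P z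
      from hmassXY l z]
    rw [hPof z]
  · -- cardinality
    have hcard : Fintype.card 𝒰 = Fintype.card 𝒴 + K := by
      calc Fintype.card 𝒰 = Fintype.card (𝒴 ⊕ Fin K) := rfl
        _ = Fintype.card 𝒴 + Fintype.card (Fin K) := Fintype.card_sum
        _ = Fintype.card 𝒴 + K := by rw [Fintype.card_fin]
    rw [hcard]
    have ha : 1 ≤ Fintype.card 𝒳 := @Fintype.card_pos _ _ hXne
    have hb : 1 ≤ Fintype.card 𝒴 := @Fintype.card_pos _ _ ⟨y₀⟩
    obtain ⟨b', hb'⟩ : ∃ b', Fintype.card 𝒴 = b' + 1 := ⟨Fintype.card 𝒴 - 1, by omega⟩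
    rw [hb'] at hLlen ⊢
    have hmul : Fintype.card 𝒳 * (b' + 1) = Fintype.card 𝒳 * b' + Fintype.card 𝒳 := by ring
    rw [hmul] at hLlen
    have hK' : K ≤ Fintype.card 𝒳 * b' + 1 := by omega
    have h1 : b' ≤ Fintype.card 𝒳 * b' := Nat.le_mul_of_pos_left b' (by omega)
    have h2 : (Fintype.card 𝒳 * b' + 1) * 2 ≤ (Fintype.card 𝒳 * b' + 1) * (Fintype.card 𝒳 + 1) :=
      Nat.mul_le_mul_left _ (by omega)
    simp only [Nat.add_sub_cancel]
    omega
  · -- mutInf = ε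
    have e1 : ent (EFRL.discMeasure (w l)) (Prod.snd : Ω' → 𝒰) = EFRL.H2 (mU l) := by
      rw [EFRL.ent_discMeasure hms _ hwnn]
      exact congrArg EFRL.H2 (funext (hmassU l))
    have e2 : ent (EFRL.discMeasure (w l)) (Prod.fst : Ω' → 𝒳) = EFRL.H2 Px := by
      rw [EFRL.ent_discMeasure hms _ hwnn]
      exact congrArg EFRL.H2 (funext (hmassX l))
    have e3 : ent (EFRL.discMeasure (w l)) (fun ω : Ω' => (ω.2, ω.1))
        = EFRL.H2 (fun z : 𝒰 × 𝒳 => w l (z.2, z.1)) := by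
      rw [EFRL.ent_discMeasure hms _ hwnn]
      exact congrArg EFRL.H2 (funext (hmassUX l))
    rw [mutInf, e1, e2, e3]
    exact hlε
  · -- condEnt = 0
    have hj : Function.Injective
        (fun z : 𝒰 × 𝒳 => ((Sum.elim (fun y => y) (fun i => f i z.2) z.1 : 𝒴), z)) :=
      fun a b h => congrArg Prod.snd h
    rw [condEnt]
    have hfun : (fun ω : Ω' => (Y' ω, ((Prod.snd ω : 𝒰), (Prod.fst ω : 𝒳))))
        = fun ω : Ω' => ((Sum.elim (fun y => y) (fun i => f i (ω.2, ω.1).2) (ω.2, ω.1).1 : 𝒴),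
            ((ω.2, ω.1) : 𝒰 × 𝒳)) := rfl
    rw [hfun, EFRL.ent_comp_inj (EFRL.discMeasure (w l)) (fun ω : Ω' => (ω.2, ω.1)) hj,
      sub_self]
end

section
/- Suppose S, X, T, Y are jointly distributed random variables taking values in finite sets, Y is conditionally independent of (S,T) given X (the Markov chain (S,T)−X−Y holds), every x with P(X=x)>0 has a well-defined conditional distribution P_{S|X=x}, and the family of vectors {P_{S|X=x} : P(X=x)>0} is linearly independent (the leakage matrix P_{S|X} is invertible). If I(S;Y)=0, then I(X;Y)=0 and I(T;Y)=0. -/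
open MeasureTheory ProbabilityTheory

section Aux

lemma meas_partition {Ω γ : Type*} [MeasurableSpace Ω] [Fintype γ] [MeasurableSpace γ]
    [MeasurableSingletonClass γ]
    (μ : Measure Ω) {C : Ω → γ} (hC : Measurable C) {E : Set Ω} (hE : MeasurableSet E) :
    μ E = ∑ c, μ (E ∩ C ⁻¹' {c}) := by
  have h1 : E = ⋃ c, E ∩ C ⁻¹' {c} := by ext ω; simp
  rw [show μ E = μ (⋃ c, E ∩ C ⁻¹' {c}) from by rw [← h1],
    measure_iUnion ?_ (fun c => hE.inter (hC (measurableSet_singleton c))), tsum_fintype]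
  intro i j hij
  simp only [Set.disjoint_left]
  rintro ω ⟨-, hi⟩ ⟨-, hj⟩
  exact hij (by simp at hi hj; rw [← hi, hj])

section main
variable {Ω α β : Type*} [MeasurableSpace Ω]
  [Fintype α] [MeasurableSpace α] [MeasurableSingletonClass α]
  [Fintype β] [MeasurableSpace β] [MeasurableSingletonClass β]
  (μ : Measure Ω) [IsProbabilityMeasure μ] {A : Ω → α} {B : Ω → β}

lemma toReal_partition {γ : Type*} [Fintype γ] [MeasurableSpace γ]
    [MeasurableSingletonClass γ] {C : Ω → γ} (hC : Measurable C) {E : Set Ω}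
    (hE : MeasurableSet E) :
    (μ E).toReal = ∑ c, (μ (E ∩ C ⁻¹' {c})).toReal := by
  rw [meas_partition μ hC hE, ENNReal.toReal_sum (fun c _ => measure_ne_top μ _)]

lemma marginal_A (hA : Measurable A) (hB : Measurable B) (a : α) :
    (μ (A ⁻¹' {a})).toReal = ∑ b, (μ {ω | A ω = a ∧ B ω = b}).toReal := by
  rw [toReal_partition μ hB (hA (measurableSet_singleton a))]
  refine Finset.sum_congr rfl fun b _ => ?_
  rw [show A ⁻¹' {a} ∩ B ⁻¹' {b} = {ω | A ω = a ∧ B ω = b} from by ext ω; simp [Set.mem_inter_iff, Set.mem_setOf_eq]]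

lemma marginal_B (hA : Measurable A) (hB : Measurable B) (b : β) :
    (μ (B ⁻¹' {b})).toReal = ∑ a, (μ {ω | A ω = a ∧ B ω = b}).toReal := by
  rw [toReal_partition μ hA (hB (measurableSet_singleton b))]
  refine Finset.sum_congr rfl fun a _ => ?_
  rw [show B ⁻¹' {b} ∩ A ⁻¹' {a} = {ω | A ω = a ∧ B ω = b} from by
    ext ω; simp [Set.mem_inter_iff, Set.mem_setOf_eq, and_comm]]

lemma mutInf_eq_sum (hA : Measurable A) (hB : Measurable B) :
    mutInf μ A B = ∑ a, ∑ b, (μ {ω | A ω = a ∧ B ω = b}).toReal *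
      (Real.logb 2 (μ {ω | A ω = a ∧ B ω = b}).toReal
        - Real.logb 2 (μ (A ⁻¹' {a})).toReal - Real.logb 2 (μ (B ⁻¹' {b})).toReal) := by
  set p : α → β → ℝ := fun a b => (μ {ω | A ω = a ∧ B ω = b}).toReal with hp
  have e1 : ent μ A = ∑ a, ∑ b, -(p a b * Real.logb 2 (μ (A ⁻¹' {a})).toReal) := by
    unfold ent
    refine Finset.sum_congr rfl fun a _ => ?_
    have h : ∑ b, p a b * Real.logb 2 (μ (A ⁻¹' {a})).toReal
        = (μ (A ⁻¹' {a})).toReal * Real.logb 2 (μ (A ⁻¹' {a})).toReal := by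
      rw [← Finset.sum_mul, ← marginal_A μ hA hB a]
    simp [← h]
  have e2 : ent μ B = ∑ a, ∑ b, -(p a b * Real.logb 2 (μ (B ⁻¹' {b})).toReal) := by
    unfold ent
    rw [Finset.sum_comm]
    refine Finset.sum_congr rfl fun b _ => ?_
    have h : ∑ a, p a b * Real.logb 2 (μ (B ⁻¹' {b})).toReal
        = (μ (B ⁻¹' {b})).toReal * Real.logb 2 (μ (B ⁻¹' {b})).toReal := by
      rw [← Finset.sum_mul, ← marginal_B μ hA hB b]
    simp [← h]
  have e3 : ent μ (fun ω => (A ω, B ω)) = ∑ a, ∑ b, -(p a b * Real.logb 2 (p a b)) := by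
    unfold ent
    rw [Fintype.sum_prod_type]
    refine Finset.sum_congr rfl fun a _ => Finset.sum_congr rfl fun b _ => ?_
    have h : (fun ω => (A ω, B ω)) ⁻¹' {(a, b)} = {ω | A ω = a ∧ B ω = b} := by
      ext ω; simp [Prod.ext_iff]
    rw [h]
  rw [mutInf, e1, e2, e3, ← Finset.sum_add_distrib, ← Finset.sum_sub_distrib]
  refine Finset.sum_congr rfl fun a _ => ?_
  rw [← Finset.sum_add_distrib, ← Finset.sum_sub_distrib]
  refine Finset.sum_congr rfl fun b _ => ?_
  ring

lemma sum_p_eq_one (hA : Measurable A) (hB : Measurable B) :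
    ∑ a, ∑ b, (μ {ω | A ω = a ∧ B ω = b}).toReal = 1 := by
  have h : ∑ a, (μ (A ⁻¹' {a})).toReal = 1 := by
    have := toReal_partition μ (C := A) hA (E := Set.univ) MeasurableSet.univ
    simp only [Set.univ_inter] at this
    rw [← this]
    simp
  rw [← h]
  exact Finset.sum_congr rfl fun a _ => (marginal_A μ hA hB a).symm

lemma term_ge {p qa qb : ℝ} (hp : 0 ≤ p) (hqa : 0 ≤ qa) (hqb : 0 ≤ qb)
    (ha : p ≤ qa) (hb : p ≤ qb) :
    p - qa * qb ≤ p * (Real.logb 2 p - Real.logb 2 qa - Real.logb 2 qb) * Real.log 2 := by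
  rcases hp.eq_or_lt with h0 | hp0
  · subst h0; simpa using mul_nonneg hqa hqb
  · have hqa0 : 0 < qa := lt_of_lt_of_le hp0 ha
    have hqb0 : 0 < qb := lt_of_lt_of_le hp0 hb
    have hq : 0 < qa * qb := mul_pos hqa0 hqb0
    have hlog : Real.log (qa * qb / p) ≤ qa * qb / p - 1 :=
      Real.log_le_sub_one_of_pos (div_pos hq hp0)
    have hL : (Real.logb 2 p - Real.logb 2 qa - Real.logb 2 qb) * Real.log 2
        = Real.log p - Real.log (qa * qb) := by
      rw [Real.logb, Real.logb, Real.logb, Real.log_mul (ne_of_gt hqa0) (ne_of_gt hqb0)]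
      field_simp
      ring
    rw [mul_assoc, hL]
    have hdiv : Real.log (qa * qb / p) = Real.log (qa * qb) - Real.log p :=
      Real.log_div (ne_of_gt hq) (ne_of_gt hp0)
    nlinarith [mul_le_mul_of_nonneg_left hlog hp, mul_div_cancel₀ (qa*qb) (ne_of_gt hp0)]

lemma term_eq {p qa qb : ℝ} (hp : 0 ≤ p) (hqa : 0 ≤ qa) (hqb : 0 ≤ qb)
    (ha : p ≤ qa) (hb : p ≤ qb)
    (h : p * (Real.logb 2 p - Real.logb 2 qa - Real.logb 2 qb) * Real.log 2 = p - qa * qb) :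
    p = qa * qb := by
  rcases hp.eq_or_lt with h0 | hp0
  · subst h0
    simp only [zero_mul] at h
    nlinarith [mul_nonneg hqa hqb]
  · have hqa0 : 0 < qa := lt_of_lt_of_le hp0 ha
    have hqb0 : 0 < qb := lt_of_lt_of_le hp0 hb
    have hq : 0 < qa * qb := mul_pos hqa0 hqb0
    by_contra hne
    have hr1 : qa * qb / p ≠ 1 := by
      intro hc
      exact hne (by field_simp at hc; linarith)
    have hlog : Real.log (qa * qb / p) < qa * qb / p - 1 :=
      Real.log_lt_sub_one_of_pos (div_pos hq hp0) hr1
    have hL : (Real.logb 2 p - Real.logb 2 qa - Real.logb 2 qb) * Real.log 2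
        = Real.log p - Real.log (qa * qb) := by
      rw [Real.logb, Real.logb, Real.logb, Real.log_mul (ne_of_gt hqa0) (ne_of_gt hqb0)]
      field_simp
      ring
    rw [mul_assoc, hL] at h
    have hdiv : Real.log (qa * qb / p) = Real.log (qa * qb) - Real.log p :=
      Real.log_div (ne_of_gt hq) (ne_of_gt hp0)
    nlinarith [mul_lt_mul_of_pos_left hlog hp0, mul_div_cancel₀ (qa*qb) (ne_of_gt hp0)]

lemma term_zero {p qa qb : ℝ} (hp : 0 ≤ p) (h : p = qa * qb) (hqa0 : p ≠ 0 → qa ≠ 0)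
    (hqb0 : p ≠ 0 → qb ≠ 0) :
    p * (Real.logb 2 p - Real.logb 2 qa - Real.logb 2 qb) = 0 := by
  rcases eq_or_ne p 0 with h0 | h0
  · simp [h0]
  · rw [h, Real.logb_mul (hqa0 h0) (hqb0 h0)]; ring

lemma sum_marg_one {Ω γ : Type*} [MeasurableSpace Ω] [Fintype γ] [MeasurableSpace γ]
    [MeasurableSingletonClass γ] (μ : Measure Ω) [IsProbabilityMeasure μ]
    {C : Ω → γ} (hC : Measurable C) :
    ∑ c, (μ (C ⁻¹' {c})).toReal = 1 := by
  have := toReal_partition μ (C := C) hC (E := Set.univ) MeasurableSet.univ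
  simp only [Set.univ_inter] at this
  rw [← this]
  simp

section main2
variable {Ω α β : Type*} [MeasurableSpace Ω]
  [Fintype α] [MeasurableSpace α] [MeasurableSingletonClass α]
  [Fintype β] [MeasurableSpace β] [MeasurableSingletonClass β]
  (μ : Measure Ω) [IsProbabilityMeasure μ] {A : Ω → α} {B : Ω → β}

lemma mutInf_eq_zero_iff (hA : Measurable A) (hB : Measurable B) :
    mutInf μ A B = 0 ↔ ∀ a b, (μ {ω | A ω = a ∧ B ω = b}).toReal
      = (μ (A ⁻¹' {a})).toReal * (μ (B ⁻¹' {b})).toReal := by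
  set p : α → β → ℝ := fun a b => (μ {ω | A ω = a ∧ B ω = b}).toReal with hpdef
  set pA : α → ℝ := fun a => (μ (A ⁻¹' {a})).toReal with hpAdef
  set pB : β → ℝ := fun b => (μ (B ⁻¹' {b})).toReal with hpBdef
  have hp0 : ∀ a b, 0 ≤ p a b := fun a b => ENNReal.toReal_nonneg
  have hpA0 : ∀ a, 0 ≤ pA a := fun a => ENNReal.toReal_nonneg
  have hpB0 : ∀ b, 0 ≤ pB b := fun b => ENNReal.toReal_nonneg
  have hle_A : ∀ a b, p a b ≤ pA a := fun a b =>
    ENNReal.toReal_mono (measure_ne_top μ _) (measure_mono (fun ω h => h.1))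
  have hle_B : ∀ a b, p a b ≤ pB b := fun a b =>
    ENNReal.toReal_mono (measure_ne_top μ _) (measure_mono (fun ω h => h.2))
  set L : α → β → ℝ := fun a b =>
    Real.logb 2 (p a b) - Real.logb 2 (pA a) - Real.logb 2 (pB b) with hLdef
  have hMI : mutInf μ A B = ∑ z : α × β, p z.1 z.2 * L z.1 z.2 := by
    rw [mutInf_eq_sum μ hA hB, Fintype.sum_prod_type]
  have hq1 : ∑ z : α × β, pA z.1 * pB z.2 = 1 := by
    rw [Fintype.sum_prod_type]
    rw [show ∑ a, ∑ b, pA a * pB b = (∑ a, pA a) * (∑ b, pB b) from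
      (Finset.sum_mul_sum _ _ _ _).symm, sum_marg_one μ hA, sum_marg_one μ hB, one_mul]
  have hp1 : ∑ z : α × β, p z.1 z.2 = 1 := by
    rw [Fintype.sum_prod_type]; exact sum_p_eq_one μ hA hB
  constructor
  · intro h
    set F : α × β → ℝ := fun z =>
      p z.1 z.2 * L z.1 z.2 * Real.log 2 - (p z.1 z.2 - pA z.1 * pB z.2) with hFdef
    have hF0 : ∀ z : α × β, 0 ≤ F z := fun z =>
      sub_nonneg.mpr (term_ge (hp0 z.1 z.2) (hpA0 z.1) (hpB0 z.2) (hle_A z.1 z.2)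
        (hle_B z.1 z.2))
    have hFsum : ∑ z : α × β, F z = 0 := by
      rw [hFdef]
      rw [Finset.sum_sub_distrib, Finset.sum_sub_distrib, ← Finset.sum_mul, ← hMI, h,
        hp1, hq1]
      ring
    have hFz : ∀ z : α × β, F z = 0 := by
      intro z
      have := (Finset.sum_eq_zero_iff_of_nonneg (fun z _ => hF0 z)).mp hFsum
      exact this z (Finset.mem_univ z)
    intro a b
    have hz := hFz (a, b)
    rw [hFdef] at hz
    simp only [sub_eq_zero] at hz
    exact term_eq (hp0 a b) (hpA0 a) (hpB0 b) (hle_A a b) (hle_B a b) hz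
  · intro h
    rw [mutInf_eq_sum μ hA hB]
    refine Finset.sum_eq_zero fun a _ => Finset.sum_eq_zero fun b _ => ?_
    refine term_zero (hp0 a b) (h a b) (fun hne => ?_) (fun hne => ?_)
    · intro hc
      exact hne (le_antisymm (by rw [← hc] at *; exact hle_A a b) (hp0 a b))
    · intro hc
      exact hne (le_antisymm (by rw [← hc] at *; exact hle_B a b) (hp0 a b))
end main2

end main

end Aux

/-- **Example 1 of the paper.** If the Markov chain `(S, T) − X − Y` holds, every `x`
with `P(X = x) > 0` has a well-defined conditional distribution `P_{S|X=x}`, and the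
family of vectors `{P_{S|X=x} : P(X = x) > 0}` is linearly independent (the leakage
matrix `P_{S|X}` is invertible), then `I(S ; Y) = 0` implies `I(X ; Y) = 0` and
`I(T ; Y) = 0`. -/
theorem perfect_parity_zero_utility
    {Ω 𝒮 𝒳 𝒯 𝒴 : Type} [MeasurableSpace Ω] (μ : Measure Ω) [IsProbabilityMeasure μ]
    [Fintype 𝒮] [MeasurableSpace 𝒮] [MeasurableSingletonClass 𝒮]
    [Fintype 𝒳] [MeasurableSpace 𝒳] [MeasurableSingletonClass 𝒳]
    [Fintype 𝒯] [MeasurableSpace 𝒯] [MeasurableSingletonClass 𝒯]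
    [Fintype 𝒴] [MeasurableSpace 𝒴] [MeasurableSingletonClass 𝒴]
    (S : Ω → 𝒮) (X : Ω → 𝒳) (T : Ω → 𝒯) (Y : Ω → 𝒴)
    (hS : Measurable S) (hX : Measurable X) (hT : Measurable T) (hY : Measurable Y)
    -- the Markov chain (S, T) − X − Y: conditional independence of (S, T) and Y given X
    (hMarkov : ∀ (s : 𝒮) (t : 𝒯) (x : 𝒳) (y : 𝒴),
      μ {ω | S ω = s ∧ T ω = t ∧ X ω = x ∧ Y ω = y} * μ (X ⁻¹' {x}) =
        μ {ω | S ω = s ∧ T ω = t ∧ X ω = x} * μ {ω | X ω = x ∧ Y ω = y})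
    -- the leakage matrix P_{S|X} is invertible: the conditional distributions
    -- P_{S|X=x}, for x with P(X = x) > 0, are linearly independent
    (hLI : LinearIndependent ℝ
      (fun (x : {x : 𝒳 // μ (X ⁻¹' {x}) ≠ 0}) (s : 𝒮) =>
        (μ {ω | S ω = s ∧ X ω = x.1}).toReal / (μ (X ⁻¹' {x.1})).toReal))
    (hSY : mutInf μ S Y = 0) :
    mutInf μ X Y = 0 ∧ mutInf μ T Y = 0 := by
  classical
  -- measurability of the various sets
  have mS : ∀ s, MeasurableSet {ω | S ω = s} := fun s => hS (measurableSet_singleton s)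
  have mX : ∀ x, MeasurableSet {ω | X ω = x} := fun x => hX (measurableSet_singleton x)
  have mY : ∀ y, MeasurableSet {ω | Y ω = y} := fun y => hY (measurableSet_singleton y)
  have mSXY : ∀ s x y, MeasurableSet {ω | S ω = s ∧ X ω = x ∧ Y ω = y} := by
    intro s x y
    have h : {ω | S ω = s ∧ X ω = x ∧ Y ω = y}
        = {ω | S ω = s} ∩ ({ω | X ω = x} ∩ {ω | Y ω = y}) := by
      ext ω; simp [Set.mem_inter_iff, Set.mem_setOf_eq]
    rw [h]; exact (mS s).inter ((mX x).inter (mY y))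
  have mSX : ∀ s x, MeasurableSet {ω | S ω = s ∧ X ω = x} := by
    intro s x
    have h : {ω | S ω = s ∧ X ω = x} = {ω | S ω = s} ∩ {ω | X ω = x} := by
      ext ω; simp [Set.mem_inter_iff, Set.mem_setOf_eq]
    rw [h]; exact (mS s).inter (mX x)
  -- Markov chain with T marginalized out, in toReal form
  have hM2 : ∀ (s : 𝒮) (x : 𝒳) (y : 𝒴),
      (μ {ω | S ω = s ∧ X ω = x ∧ Y ω = y}).toReal * (μ (X ⁻¹' {x})).toReal =
        (μ {ω | S ω = s ∧ X ω = x}).toReal * (μ {ω | X ω = x ∧ Y ω = y}).toReal := by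
    intro s x y
    have h1 : μ {ω | S ω = s ∧ X ω = x ∧ Y ω = y}
        = ∑ t, μ {ω | S ω = s ∧ T ω = t ∧ X ω = x ∧ Y ω = y} := by
      rw [meas_partition μ hT (mSXY s x y)]
      refine Finset.sum_congr rfl fun t _ => ?_
      congr 1
      ext ω; simp only [Set.mem_inter_iff, Set.mem_setOf_eq, Set.mem_preimage,
        Set.mem_singleton_iff]; tauto
    have h2 : μ {ω | S ω = s ∧ X ω = x}
        = ∑ t, μ {ω | S ω = s ∧ T ω = t ∧ X ω = x} := by
      rw [meas_partition μ hT (mSX s x)]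
      refine Finset.sum_congr rfl fun t _ => ?_
      congr 1
      ext ω; simp only [Set.mem_inter_iff, Set.mem_setOf_eq, Set.mem_preimage,
        Set.mem_singleton_iff]; tauto
    have h3 : μ {ω | S ω = s ∧ X ω = x ∧ Y ω = y} * μ (X ⁻¹' {x})
        = μ {ω | S ω = s ∧ X ω = x} * μ {ω | X ω = x ∧ Y ω = y} := by
      rw [h1, h2, Finset.sum_mul, Finset.sum_mul]
      exact Finset.sum_congr rfl fun t _ => hMarkov s t x y
    calc (μ {ω | S ω = s ∧ X ω = x ∧ Y ω = y}).toReal * (μ (X ⁻¹' {x})).toReal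
        = (μ {ω | S ω = s ∧ X ω = x ∧ Y ω = y} * μ (X ⁻¹' {x})).toReal := by
          rw [ENNReal.toReal_mul]
      _ = (μ {ω | S ω = s ∧ X ω = x} * μ {ω | X ω = x ∧ Y ω = y}).toReal := by rw [h3]
      _ = _ := ENNReal.toReal_mul
  -- independence of S and Y in real form
  have indepSY := (mutInf_eq_zero_iff μ hS hY).mp hSY
  -- independence of X and Y
  have indepXY : ∀ (x : 𝒳) (y : 𝒴), (μ {ω | X ω = x ∧ Y ω = y}).toReal
      = (μ (X ⁻¹' {x})).toReal * (μ (Y ⁻¹' {y})).toReal := by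
    intro x₀ y
    -- linear combination vanishes
    set g : {x : 𝒳 // μ (X ⁻¹' {x}) ≠ 0} → ℝ := fun x =>
      (μ {ω | X ω = x.1 ∧ Y ω = y}).toReal
        - (μ (X ⁻¹' {x.1})).toReal * (μ (Y ⁻¹' {y})).toReal with hgdef
    set f : 𝒳 → 𝒮 → ℝ := fun x => fun s => (μ {ω | S ω = s ∧ X ω = x ∧ Y ω = y}).toReal
        - (μ {ω | S ω = s ∧ X ω = x}).toReal * (μ (Y ⁻¹' {y})).toReal with hfdef
    have hcomb : ∑ x : {x : 𝒳 // μ (X ⁻¹' {x}) ≠ 0}, g x •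
        (fun s : 𝒮 => (μ {ω | S ω = s ∧ X ω = x.1}).toReal / (μ (X ⁻¹' {x.1})).toReal)
        = 0 := by
      funext s
      simp only [Pi.zero_apply]
      rw [Finset.sum_apply]
      have hterm : ∀ x : {x : 𝒳 // μ (X ⁻¹' {x}) ≠ 0},
          (g x • fun s : 𝒮 => (μ {ω | S ω = s ∧ X ω = x.1}).toReal
            / (μ (X ⁻¹' {x.1})).toReal) s = f x.1 s := by
        intro x
        have hpx : (μ (X ⁻¹' {x.1})).toReal ≠ 0 := by
          simp [ENNReal.toReal_eq_zero_iff, x.2, measure_ne_top]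
        simp only [Pi.smul_apply, smul_eq_mul, hgdef, hfdef]
        have hm := hM2 s x.1 y
        field_simp
        nlinarith [hm]
      rw [Finset.sum_congr rfl fun x _ => hterm x]
      have hzero : ∀ x : 𝒳, μ (X ⁻¹' {x}) = 0 → f x s = 0 := by
        intro x hx
        have h1 : μ {ω | S ω = s ∧ X ω = x ∧ Y ω = y} = 0 :=
          le_antisymm (hx ▸ measure_mono (fun ω h => h.2.1)) zero_le
        have h2 : μ {ω | S ω = s ∧ X ω = x} = 0 :=
          le_antisymm (hx ▸ measure_mono (fun ω h => h.2)) zero_le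
        simp [hfdef, h1, h2]
      have hsub : ∑ x : {x : 𝒳 // μ (X ⁻¹' {x}) ≠ 0}, f x.1 s
          = ∑ x : 𝒳, f x s := by
        rw [← Finset.sum_subtype (Finset.univ.filter (fun x => μ (X ⁻¹' {x}) ≠ 0))
          (fun x => by simp) (fun x => f x s)]
        exact Finset.sum_filter_of_ne fun x _ hfx => by
          intro hx; exact hfx (hzero x hx)
      rw [hsub]
      have hA : ∑ x : 𝒳, (μ {ω | S ω = s ∧ X ω = x ∧ Y ω = y}).toReal
          = (μ {ω | S ω = s ∧ Y ω = y}).toReal := by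
        have mSY : MeasurableSet {ω | S ω = s ∧ Y ω = y} := by
          rw [show {ω | S ω = s ∧ Y ω = y} = {ω | S ω = s} ∩ {ω | Y ω = y} from by
            ext ω; simp [Set.mem_inter_iff, Set.mem_setOf_eq]]
          exact (mS s).inter (mY y)
        rw [toReal_partition μ hX mSY]
        refine Finset.sum_congr rfl fun x _ => ?_
        rw [show {ω | S ω = s ∧ Y ω = y} ∩ X ⁻¹' {x} = {ω | S ω = s ∧ X ω = x ∧ Y ω = y}
          from by ext ω; simp only [Set.mem_inter_iff, Set.mem_setOf_eq, Set.mem_preimage,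
            Set.mem_singleton_iff] <;> tauto]
      have hB : ∑ x : 𝒳, (μ {ω | S ω = s ∧ X ω = x}).toReal
          = (μ (S ⁻¹' {s})).toReal := by
        rw [toReal_partition μ hX (hS (measurableSet_singleton s))]
        refine Finset.sum_congr rfl fun x _ => ?_
        rw [show S ⁻¹' {s} ∩ X ⁻¹' {x} = {ω | S ω = s ∧ X ω = x}
          from by ext ω; simp only [Set.mem_inter_iff, Set.mem_setOf_eq, Set.mem_preimage,
            Set.mem_singleton_iff] <;> tauto]
      simp only [hfdef, Finset.sum_sub_distrib, ← Finset.sum_mul, hA, hB]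
      rw [indepSY s y, sub_self]
    have hg0 := Fintype.linearIndependent_iff.mp hLI g hcomb
    by_cases hx : μ (X ⁻¹' {x₀}) = 0
    · have h1 : μ {ω | X ω = x₀ ∧ Y ω = y} = 0 :=
        le_antisymm (hx ▸ measure_mono (fun ω h => h.1)) zero_le
      rw [h1, hx]; simp
    · have := hg0 ⟨x₀, hx⟩
      rw [hgdef] at this
      simpa [sub_eq_zero] using this
  refine ⟨(mutInf_eq_zero_iff μ hX hY).mpr indepXY, ?_⟩
  -- T part
  have key : ∀ (s : 𝒮) (t : 𝒯) (x : 𝒳) (y : 𝒴),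
      (μ {ω | S ω = s ∧ T ω = t ∧ X ω = x ∧ Y ω = y}).toReal
        = (μ {ω | S ω = s ∧ T ω = t ∧ X ω = x}).toReal * (μ (Y ⁻¹' {y})).toReal := by
    intro s t x y
    by_cases hx : μ (X ⁻¹' {x}) = 0
    · have h1 : μ {ω | S ω = s ∧ T ω = t ∧ X ω = x ∧ Y ω = y} = 0 :=
        le_antisymm (hx ▸ measure_mono (fun ω h => h.2.2.1)) zero_le
      have h2 : μ {ω | S ω = s ∧ T ω = t ∧ X ω = x} = 0 :=
        le_antisymm (hx ▸ measure_mono (fun ω h => h.2.2)) zero_le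
      simp [h1, h2]
    · have hpx : (μ (X ⁻¹' {x})).toReal ≠ 0 := by
        simp [ENNReal.toReal_eq_zero_iff, hx, measure_ne_top]
      have hm : (μ {ω | S ω = s ∧ T ω = t ∧ X ω = x ∧ Y ω = y}).toReal
          * (μ (X ⁻¹' {x})).toReal
          = (μ {ω | S ω = s ∧ T ω = t ∧ X ω = x}).toReal
            * (μ {ω | X ω = x ∧ Y ω = y}).toReal := by
        have := hMarkov s t x y
        calc (μ {ω | S ω = s ∧ T ω = t ∧ X ω = x ∧ Y ω = y}).toReal
            * (μ (X ⁻¹' {x})).toReal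
            = (μ {ω | S ω = s ∧ T ω = t ∧ X ω = x ∧ Y ω = y} * μ (X ⁻¹' {x})).toReal := by
              rw [ENNReal.toReal_mul]
          _ = _ := by rw [this, ENNReal.toReal_mul]
      rw [indepXY x y] at hm
      exact mul_right_cancel₀ hpx (by linear_combination hm)
  have indepTY : ∀ (t : 𝒯) (y : 𝒴), (μ {ω | T ω = t ∧ Y ω = y}).toReal
      = (μ (T ⁻¹' {t})).toReal * (μ (Y ⁻¹' {y})).toReal := by
    intro t y
    have mTY : MeasurableSet {ω | T ω = t ∧ Y ω = y} := by
      rw [show {ω | T ω = t ∧ Y ω = y} = {ω | T ω = t} ∩ {ω | Y ω = y} from by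
        ext ω; simp [Set.mem_inter_iff, Set.mem_setOf_eq]]
      exact (hT (measurableSet_singleton t)).inter (mY y)
    have mTXY : ∀ x, MeasurableSet ({ω | T ω = t ∧ Y ω = y} ∩ X ⁻¹' {x}) := fun x =>
      mTY.inter (mX x)
    have e1 : (μ {ω | T ω = t ∧ Y ω = y}).toReal
        = ∑ x, ∑ s, (μ {ω | S ω = s ∧ T ω = t ∧ X ω = x ∧ Y ω = y}).toReal := by
      rw [toReal_partition μ hX mTY]
      refine Finset.sum_congr rfl fun x _ => ?_
      rw [toReal_partition μ hS (mTXY x)]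
      refine Finset.sum_congr rfl fun s _ => ?_
      rw [show {ω | T ω = t ∧ Y ω = y} ∩ X ⁻¹' {x} ∩ S ⁻¹' {s}
          = {ω | S ω = s ∧ T ω = t ∧ X ω = x ∧ Y ω = y}
        from by ext ω; simp only [Set.mem_inter_iff, Set.mem_setOf_eq, Set.mem_preimage,
          Set.mem_singleton_iff] <;> tauto]
    have e2 : (μ (T ⁻¹' {t})).toReal
        = ∑ x, ∑ s, (μ {ω | S ω = s ∧ T ω = t ∧ X ω = x}).toReal := by
      rw [toReal_partition μ hX (hT (measurableSet_singleton t))]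
      refine Finset.sum_congr rfl fun x _ => ?_
      rw [toReal_partition μ hS (E := T ⁻¹' {t} ∩ X ⁻¹' {x})
        ((hT (measurableSet_singleton t)).inter (hX (measurableSet_singleton x)))]
      refine Finset.sum_congr rfl fun s _ => ?_
      rw [show T ⁻¹' {t} ∩ X ⁻¹' {x} ∩ S ⁻¹' {s}
          = {ω | S ω = s ∧ T ω = t ∧ X ω = x}
        from by ext ω; simp only [Set.mem_inter_iff, Set.mem_setOf_eq, Set.mem_preimage,
          Set.mem_singleton_iff] <;> tauto]
    rw [e1, e2, Finset.sum_mul]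
    refine Finset.sum_congr rfl fun x _ => ?_
    rw [Finset.sum_mul]
    exact Finset.sum_congr rfl fun s _ => key s t x y
  exact (mutInf_eq_zero_iff μ hT hY).mpr indepTY
end

section
/- Randomization scaling lemma: Let S and U be jointly distributed random variables taking values in finite sets 𝒮 and 𝒰, let α ∈ [0,1], let B be a Bernoulli random variable with P(B=1)=α that is independent of the pair (S,U), and let c be a symbol not belonging to 𝒰. Define U' = U if B=1 and U' = c if B=0. Then I(S;U') = α·I(S;U). -/
open MeasureTheory ProbabilityTheory

/-! `U'` is the output of an erasure channel fed with `U`, erasing with probability `1 - α`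
independently of `(S, U)`. Because the value of `U'` reveals the coin `B`, entropy splits along
`B` (the grouping rule): `H(U') = H(B) + α H(U)` and `H(S, U') = H(B) + (1 - α) H(S) + α H(S, U)`,
the second because the erased pair `(S, c)` carries exactly the information of `S`. The `H(B)`
terms cancel in `I(S ; U') = H(S) + H(U') - H(S, U')`. -/

open Function Real

lemma neg_mul_logb_mul (a b : ℝ) :
    -(a * b * logb 2 (a * b)) = b * -(a * logb 2 a) + a * -(b * logb 2 b) := by
  have h (x : ℝ) : -(x * logb 2 x) = negMulLog x / log 2 := by
    simp only [negMulLog, logb]; ring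
  rw [h, h, h, negMulLog_mul]; ring

lemma sum_neg_mul_logb_const_mul {ι : Type*} [Fintype ι] (c : ℝ) (p : ι → ℝ)
    (hp : ∑ i, p i = 1) :
    ∑ i, -(c * p i * logb 2 (c * p i)) = c * ∑ i, -(p i * logb 2 (p i)) + -(c * logb 2 c) := by
  simp only [neg_mul_logb_mul, Finset.sum_add_distrib, ← Finset.mul_sum, ← Finset.sum_mul, hp]
  ring

lemma ProbabilityTheory.IndepFun.toReal_measure_inter_preimage_singleton {Ω α γ : Type*}
    [MeasurableSpace Ω] {μ : Measure Ω} [MeasurableSpace α] [MeasurableSingletonClass α]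
    [MeasurableSpace γ] [MeasurableSingletonClass γ]
    {B : Ω → γ} {X : Ω → α} (h : IndepFun B X μ) (b : γ) (a : α) :
    (μ (B ⁻¹' {b} ∩ X ⁻¹' {a})).toReal = (μ (B ⁻¹' {b})).toReal * (μ (X ⁻¹' {a})).toReal := by
  rw [h.measure_inter_preimage_eq_mul _ _ (measurableSet_singleton _) (measurableSet_singleton _),
    ENNReal.toReal_mul]

section Entropy

variable {Ω α β : Type*} [MeasurableSpace Ω] {μ : Measure Ω} [Fintype α] [Fintype β]

lemma sum_toReal_measure_preimage_singleton [IsProbabilityMeasure μ] [MeasurableSpace α]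
    [MeasurableSingletonClass α] {X : Ω → α} (hX : Measurable X) :
    ∑ a, (μ (X ⁻¹' {a})).toReal = 1 := by
  simpa [measureReal_def] using sum_measureReal_preimage_singleton (μ := μ) Finset.univ
    (fun a _ => hX (measurableSet_singleton a))

lemma ent_const [IsProbabilityMeasure μ] (c : α) : ent μ (fun _ => c) = 0 := by
  refine Finset.sum_eq_zero fun a _ => ?_
  by_cases h : c = a <;> simp [h]

lemma ent_comp_of_injective {f : α → β} (hf : Injective f) (X : Ω → α) :
    ent μ (fun ω => f (X ω)) = ent μ X := by
  refine (Fintype.sum_of_injective f hf _ _ (fun b hb => ?_) (fun a => ?_)).symm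
  · have : (fun ω => f (X ω)) ⁻¹' {b} = ∅ :=
      Set.eq_empty_of_forall_notMem fun ω h => hb ⟨X ω, h⟩
    simp [this]
  · simp only [Set.preimage, Set.mem_singleton_iff, hf.eq_iff]

variable [IsProbabilityMeasure μ] [MeasurableSpace α] [MeasurableSingletonClass α]
  [MeasurableSpace β] [MeasurableSingletonClass β] {B : Ω → Bool} {X : Ω → α} {Y : Ω → β}

theorem ent_ite_inr_inl (hX : Measurable X) (hY : Measurable Y)
    (hBX : IndepFun B X μ) (hBY : IndepFun B Y μ) :
    ent μ (fun ω => if B ω then Sum.inr (Y ω) else Sum.inl (X ω)) =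
      ent μ B + (μ (B ⁻¹' {false})).toReal * ent μ X + (μ (B ⁻¹' {true})).toReal * ent μ Y := by
  set Z := fun ω => if B ω then Sum.inr (Y ω) else Sum.inl (X ω)
  have hinl (a : α) : Z ⁻¹' {Sum.inl a} = B ⁻¹' {false} ∩ X ⁻¹' {a} := by
    ext ω; cases h : B ω <;> simp [Z, h]
  have hinr (b : β) : Z ⁻¹' {Sum.inr b} = B ⁻¹' {true} ∩ Y ⁻¹' {b} := by
    ext ω; cases h : B ω <;> simp [Z, h]
  rw [ent, Fintype.sum_sum_type]
  simp only [hinl, hinr, hBX.toReal_measure_inter_preimage_singleton,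
    hBY.toReal_measure_inter_preimage_singleton]
  rw [sum_neg_mul_logb_const_mul _ _ (sum_toReal_measure_preimage_singleton hX),
    sum_neg_mul_logb_const_mul _ _ (sum_toReal_measure_preimage_singleton hY)]
  simp only [ent, Fintype.sum_bool]
  ring

theorem ent_ite_some_none (hX : Measurable X) (hBX : IndepFun B X μ) :
    ent μ (fun ω => if B ω then some (X ω) else none) =
      ent μ B + (μ (B ⁻¹' {true})).toReal * ent μ X := by
  have hf : Injective (Sum.elim (fun _ : Unit => (none : Option α)) some) :=
    injective_of_subsingleton _ |>.sumElim (Option.some_injective _) (by simp)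
  have hmix := ent_ite_inr_inl measurable_const hX (indepFun_const_right B ()) hBX
  rw [ent_const, mul_zero, add_zero, ← ent_comp_of_injective hf] at hmix
  rw [← hmix]
  congr 1; funext ω; cases B ω <;> rfl

theorem ent_prod_ite_some_none (hX : Measurable X) (hY : Measurable Y)
    (hBXY : IndepFun B (fun ω => (X ω, Y ω)) μ) :
    ent μ (fun ω => (X ω, if B ω then some (Y ω) else none)) =
      ent μ B + (μ (B ⁻¹' {false})).toReal * ent μ X +
        (μ (B ⁻¹' {true})).toReal * ent μ (fun ω => (X ω, Y ω)) := by
  have hf : Injective (Sum.elim (fun a : α => (a, (none : Option β)))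
      (fun p : α × β => (p.1, some p.2))) := by
    refine Injective.sumElim (fun a a' h => ?_) (fun p q h => ?_) (by simp)
    · simpa using h
    · simpa [Prod.ext_iff] using h
  have hmix := ent_ite_inr_inl (B := B) hX (hX.prodMk hY)
    (hBXY.comp measurable_id measurable_fst) hBXY
  rw [← ent_comp_of_injective hf] at hmix
  rw [← hmix]
  congr 1; funext ω; cases B ω <;> rfl

end Entropy

theorem randomization_scaling_lemma_general
    {Ω 𝒮 𝒰 : Type} [MeasurableSpace Ω] (μ : Measure Ω) [IsProbabilityMeasure μ]
    [Fintype 𝒮] [MeasurableSpace 𝒮] [MeasurableSingletonClass 𝒮]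
    [Fintype 𝒰] [MeasurableSpace 𝒰] [MeasurableSingletonClass 𝒰]
    (S : Ω → 𝒮) (U : Ω → 𝒰) (B : Ω → Bool)
    (hS : Measurable S) (hU : Measurable U) (hB : Measurable B)
    (α : ℝ)
    (hBern : (μ (B ⁻¹' {true})).toReal = α)
    (hInd : IndepFun B (fun ω => (S ω, U ω)) μ) :
    mutInf μ S (fun ω => if B ω then (some (U ω) : Option 𝒰) else none) =
      α * mutInf μ S U := by
  have hfalse : (μ (B ⁻¹' {false})).toReal = 1 - α := by
    have : B ⁻¹' {false} = (B ⁻¹' {true})ᶜ := by ext ω; simp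
    rw [← hBern, this]
    exact probReal_compl_eq_one_sub (hB (measurableSet_singleton _))
  rw [mutInf, mutInf, ent_ite_some_none (B := B) hU (hInd.comp measurable_id measurable_snd),
    ent_prod_ite_some_none hS hU hInd, hfalse, hBern]
  ring

/-- **Randomization scaling lemma.** Let `S` and `U` be jointly distributed random
variables with values in finite sets `𝒮` and `𝒰`, let `α ∈ [0,1]`, and let `B` be a
Bernoulli random variable with `P(B = 1) = α` independent of the pair `(S, U)`.
Defining `U' = U` if `B = 1` and `U' = c` if `B = 0`, where `c` is a symbol not in `𝒰`
(modelled as `none : Option 𝒰`, with `U` embedded via `some`), we get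
`I(S ; U') = α · I(S ; U)`. -/
theorem randomization_scaling_lemma
    {Ω 𝒮 𝒰 : Type} [MeasurableSpace Ω] (μ : Measure Ω) [IsProbabilityMeasure μ]
    [Fintype 𝒮] [MeasurableSpace 𝒮] [MeasurableSingletonClass 𝒮]
    [Fintype 𝒰] [MeasurableSpace 𝒰] [MeasurableSingletonClass 𝒰]
    (S : Ω → 𝒮) (U : Ω → 𝒰) (B : Ω → Bool)
    (hS : Measurable S) (hU : Measurable U) (hB : Measurable B)
    (α : ℝ) (hα0 : 0 ≤ α) (hα1 : α ≤ 1)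
    (hBern : (μ (B ⁻¹' {true})).toReal = α)
    (hInd : IndepFun B (fun ω => (S ω, U ω)) μ) :
    mutInf μ S (fun ω => if B ω then (some (U ω) : Option 𝒰) else none) =
      α * mutInf μ S U :=
  randomization_scaling_lemma_general μ S U B hS hU hB α hBern hInd
end

section
/- Upper bound U₀ under perfect statistical parity: Let S, T, Y be jointly distributed random variables with values in finite sets, with P(S=s) > 0 for every s in the range of S. For each value t of T and each m ∈ [0,1] define q_t(m) = Σ_{s : P(T=t|S=s) ≥ m} P(S=s), and define U₀ = H(T) + Σ_t ∫₀¹ q_t(m)·log₂(q_t(m)) dm (with the convention 0·log₂0 = 0). If I(Y;S) = 0, then I(Y;T) ≤ U₀. -/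
open MeasureTheory ProbabilityTheory

section Auxiliary

open Set

lemma sum_toReal_meas_inter {Ω α : Type*} [MeasurableSpace Ω] (μ : Measure Ω) [IsFiniteMeasure μ]
    [Fintype α] [MeasurableSpace α] [MeasurableSingletonClass α]
    {X : Ω → α} (hX : Measurable X) (E : Set Ω) (A : Finset α) :
    ∑ x ∈ A, (μ (E ∩ X ⁻¹' {x})).toReal = (μ (E ∩ X ⁻¹' ↑A)).toReal := by
  have h1 : ∀ x : α, μ (E ∩ X ⁻¹' {x}) = μ.restrict E (X ⁻¹' {x}) := by
    intro x
    rw [Measure.restrict_apply (hX (measurableSet_singleton x)), Set.inter_comm]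
  have h2 := MeasureTheory.sum_measure_preimage_singleton (μ := μ.restrict E) A
    (f := X) (fun y _ => hX (measurableSet_singleton y))
  have h3 : μ.restrict E (X ⁻¹' ↑A) = μ (E ∩ X ⁻¹' ↑A) := by
    rw [Measure.restrict_apply (hX (A.measurableSet))]
    rw [Set.inter_comm]
  rw [← h3, ← h2, ENNReal.toReal_sum (fun x _ => measure_ne_top _ _)]
  exact Finset.sum_congr rfl (fun x _ => by rw [h1])

lemma integral_if_le {α β : ℝ} (hαβ : α ≤ β) (c r : ℝ) :
    ∫ m in Ioc α β, (if m ≤ c then r else 0) = r * (min c β - min c α) := by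
  have h1 : (fun m => if m ≤ c then r else 0) = Set.indicator (Iic c) (fun _ => r) := by
    funext m; simp [Set.indicator, Set.mem_Iic]
  rw [h1, setIntegral_indicator measurableSet_Iic, setIntegral_const]
  have h2 : Ioc α β ∩ Iic c = Ioc α (min β c) := by
    ext x; simp [Set.mem_Ioc, Set.mem_Iic, and_assoc, le_min_iff]
  rw [h2, measureReal_def, Real.volume_Ioc, smul_eq_mul, mul_comm]
  congr 1
  rcases le_total c α with h | h
  · have : min β c - α ≤ 0 := by simp [min_eq_right (h.trans hαβ)]; linarith
    rw [ENNReal.ofReal_eq_zero.2 this]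
    simp [min_eq_left (h.trans hαβ), min_eq_left h]
  · rcases le_total c β with h' | h'
    · rw [min_eq_right h', ENNReal.toReal_ofReal (by linarith)]
      rw [min_eq_left h', min_eq_right h]
    · rw [min_eq_left h', ENNReal.toReal_ofReal (by linarith)]
      rw [min_eq_right h', min_eq_right (hαβ.trans h')]

lemma measurable_mindiv (x : ℝ) : Measurable fun θ : ℝ => min x θ / θ :=
  (measurable_const.min measurable_id).div measurable_id

lemma integrableOn_mindiv {x : ℝ} (hx : 0 ≤ x) : IntegrableOn (fun θ : ℝ => min x θ / θ) (Ioc 0 1) := by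
  apply Integrable.mono' (g := fun _ => (1:ℝ))
  · exact integrableOn_const measure_Ioc_lt_top.ne
  · exact (measurable_mindiv x).aestronglyMeasurable
  · filter_upwards [ae_restrict_mem measurableSet_Ioc] with θ hθ
    rw [Real.norm_eq_abs, abs_div, abs_of_pos hθ.1, abs_of_nonneg (le_min hx hθ.1.le)]
    rw [div_le_one hθ.1]
    exact min_le_right _ _

lemma integral_mindiv {x : ℝ} (hx0 : 0 ≤ x) (hx1 : x ≤ 1) :
    ∫ θ in Ioc (0:ℝ) 1, min x θ / θ = x - x * Real.log x := by
  rcases eq_or_lt_of_le hx0 with h | h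
  · rw [← h]
    rw [setIntegral_congr_fun measurableSet_Ioc (g := fun _ => (0:ℝ))
      (fun θ hθ => by simp [min_eq_left hθ.1.le])]
    simp
  · have hsplit : Ioc (0:ℝ) 1 = Ioc 0 x ∪ Ioc x 1 := (Set.Ioc_union_Ioc_eq_Ioc hx0 hx1).symm
    rw [hsplit, setIntegral_union (Set.Ioc_disjoint_Ioc_of_le le_rfl) measurableSet_Ioc
      ((integrableOn_mindiv hx0).mono_set (by rw [hsplit]; exact Set.subset_union_left))
      ((integrableOn_mindiv hx0).mono_set (by rw [hsplit]; exact Set.subset_union_right))]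
    have e1 : ∫ θ in Ioc (0:ℝ) x, min x θ / θ = ∫ θ in Ioc (0:ℝ) x, (1:ℝ) := by
      apply setIntegral_congr_fun measurableSet_Ioc
      intro θ hθ
      show min x θ / θ = 1
      rw [min_eq_right hθ.2, div_self hθ.1.ne']
    have e2 : ∫ θ in Ioc x 1, min x θ / θ = ∫ θ in Ioc x 1, x * (1/θ) := by
      apply setIntegral_congr_fun measurableSet_Ioc
      intro θ hθ
      show min x θ / θ = x * (1/θ)
      rw [min_eq_left hθ.1.le]; ring
    rw [e1, e2, setIntegral_const, integral_const_mul,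
      ← intervalIntegral.integral_of_le hx1, integral_one_div (by
        intro hmem
        rcases hmem with ⟨h1, h2⟩
        simp only [min_def, max_def] at h1 h2
        split_ifs at h1 h2 <;> linarith)]
    rw [measureReal_def, Real.volume_Ioc, ENNReal.toReal_ofReal (by linarith), Real.log_div one_ne_zero h.ne']
    simp; ring

lemma integral_minmul {a p : ℝ} (ha : 0 < a) (hp0 : 0 ≤ p) (hpa : p ≤ a) :
    ∫ θ in Ioc (0:ℝ) 1, min p (θ * a) / θ = p - p * Real.log (p / a) := by
  have e : ∀ θ : ℝ, min p (θ * a) / θ = a * (min (p/a) θ / θ) := by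
    intro θ
    rw [← mul_div_assoc, mul_min_of_nonneg _ _ ha.le, mul_div_cancel₀ _ ha.ne', mul_comm a θ]
  simp_rw [e]
  rw [integral_const_mul, integral_mindiv (div_nonneg hp0 ha.le) ((div_le_one ha).2 hpa)]
  field_simp

lemma measurable_Q {σ : Type*} [Fintype σ] (r c : σ → ℝ) : Measurable (fun m : ℝ => ∑ s : σ, if m ≤ c s then r s else 0) :=
  Finset.measurable_sum _ (fun s _ => Measurable.ite measurableSet_Iic measurable_const measurable_const)

lemma Q_nonneg {σ : Type*} [Fintype σ] (r c : σ → ℝ) (hr0 : ∀ s, 0 ≤ r s) (m : ℝ) : 0 ≤ ∑ s : σ, if m ≤ c s then r s else 0 :=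
  Finset.sum_nonneg fun s _ => by split <;> simp [hr0 s]

lemma Q_le_one {σ : Type*} [Fintype σ] (r c : σ → ℝ) (hr0 : ∀ s, 0 ≤ r s) (hr1 : ∑ s, r s = 1) (m : ℝ) : (∑ s : σ, if m ≤ c s then r s else 0) ≤ 1 := by
  rw [← hr1]
  exact Finset.sum_le_sum fun s _ => by split <;> simp [hr0 s]

lemma integrableOn_if_le {α β : ℝ} (cs rs : ℝ) :
    IntegrableOn (fun m : ℝ => if m ≤ cs then rs else 0) (Ioc α β) := by
  have h1 : (fun m : ℝ => if m ≤ cs then rs else 0) = Set.indicator (Iic cs) (fun _ => rs) := by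
    funext m; simp [Set.indicator, Set.mem_Iic]
  rw [h1]
  exact (integrableOn_const measure_Ioc_lt_top.ne).indicator measurableSet_Iic

lemma integral_Q {σ : Type*} [Fintype σ] (r c : σ → ℝ) {α β : ℝ} (hαβ : α ≤ β) :
    ∫ m in Ioc α β, (∑ s : σ, if m ≤ c s then r s else 0)
      = ∑ s : σ, r s * (min (c s) β - min (c s) α) := by
  rw [integral_finset_sum _ (fun s _ => integrableOn_if_le (c s) (r s))]
  exact Finset.sum_congr rfl fun s _ => integral_if_le hαβ (c s) (r s)

lemma integrableOn_comp_Q {σ : Type*} [Fintype σ] (r c : σ → ℝ) (hr0 : ∀ s, 0 ≤ r s) (hr1 : ∑ s, r s = 1) {α β : ℝ} {F : ℝ → ℝ} (hF : Measurable F) (M : ℝ)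
    (hM : ∀ x, 0 ≤ x → x ≤ 1 → |F x| ≤ M) :
    IntegrableOn (fun m : ℝ => F (∑ s : σ, if m ≤ c s then r s else 0)) (Ioc α β) := by
  apply Integrable.mono' (g := fun _ => M)
  · exact integrableOn_const measure_Ioc_lt_top.ne
  · exact (hF.comp (measurable_Q r c)).aestronglyMeasurable
  · filter_upwards with m
    exact hM _ (Q_nonneg r c hr0 m) (Q_le_one r c hr0 hr1 m)


lemma per_theta {ι σ : Type} [Fintype ι] [Fintype σ]
    (a p : ι → ℝ) (r c : σ → ℝ)
    (ha0 : ∀ y, 0 ≤ a y) (ha1 : ∑ y, a y = 1)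
    (hp0 : ∀ y, 0 ≤ p y)
    (hr0 : ∀ s, 0 ≤ r s) (hr1 : ∑ s, r s = 1)
    (hc1 : ∀ s, c s ≤ 1)
    (htot : ∑ y, p y = ∑ s, r s * c s)
    (hkey : ∀ A : Finset ι, ∑ y ∈ A, p y ≤ ∑ s, r s * min (c s) (∑ y ∈ A, a y))
    {θ : ℝ} (hθ : θ ∈ Ioc (0:ℝ) 1) :
    ∫ m in Ioc (0:ℝ) 1, min (∑ s : σ, if m ≤ c s then r s else 0) θ
      ≤ ∑ y, min (p y) (θ * a y) := by
  classical
  set Q : ℝ → ℝ := fun m => ∑ s : σ, if m ≤ c s then r s else 0 with hQdef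
  set A : Finset ι := Finset.univ.filter (fun y => θ * a y < p y) with hA
  set α : ℝ := ∑ y ∈ A, a y with hα
  have hα0 : 0 ≤ α := Finset.sum_nonneg fun y _ => ha0 y
  have hα1 : α ≤ 1 := by
    rw [← ha1]
    exact Finset.sum_le_sum_of_subset_of_nonneg (Finset.subset_univ A) (fun y _ _ => ha0 y)
  -- integrability of min (Q m) θ on subintervals
  have hIOn : ∀ u v : ℝ, IntegrableOn (fun m => min (Q m) θ) (Ioc u v) := by
    intro u v
    apply Integrable.mono' (g := fun _ => (1:ℝ))
    · exact integrableOn_const measure_Ioc_lt_top.ne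
    · exact ((measurable_Q r c).min measurable_const).aestronglyMeasurable
    · filter_upwards with m
      rw [Real.norm_eq_abs, abs_of_nonneg (le_min (Q_nonneg r c hr0 m) hθ.1.le)]
      exact le_trans (min_le_right _ _) hθ.2
  have hQIOn : ∀ u v : ℝ, IntegrableOn Q (Ioc u v) := by
    intro u v
    apply Integrable.mono' (g := fun _ => (1:ℝ))
    · exact integrableOn_const measure_Ioc_lt_top.ne
    · exact (measurable_Q r c).aestronglyMeasurable
    · filter_upwards with m
      rw [Real.norm_eq_abs, abs_of_nonneg (Q_nonneg r c hr0 m)]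
      exact Q_le_one r c hr0 hr1 m
  -- split the integral
  have hsplit : Ioc (0:ℝ) 1 = Ioc 0 α ∪ Ioc α 1 := (Set.Ioc_union_Ioc_eq_Ioc hα0 hα1).symm
  have hI : ∫ m in Ioc (0:ℝ) 1, min (Q m) θ
      = (∫ m in Ioc (0:ℝ) α, min (Q m) θ) + ∫ m in Ioc α 1, min (Q m) θ := by
    rw [hsplit, setIntegral_union (Set.Ioc_disjoint_Ioc_of_le le_rfl) measurableSet_Ioc (hIOn 0 α) (hIOn α 1)]
  have hb1 : ∫ m in Ioc (0:ℝ) α, min (Q m) θ ≤ θ * α := by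
    have := setIntegral_mono_on (hIOn 0 α) (integrableOn_const measure_Ioc_lt_top.ne)
      measurableSet_Ioc (fun m _ => min_le_right (Q m) θ)
    calc ∫ m in Ioc (0:ℝ) α, min (Q m) θ ≤ ∫ _ in Ioc (0:ℝ) α, θ := this
      _ = θ * α := by
        rw [setIntegral_const, measureReal_def, Real.volume_Ioc, smul_eq_mul,
          ENNReal.toReal_ofReal (by linarith), sub_zero, mul_comm]
  have hb2 : ∫ m in Ioc α 1, min (Q m) θ ≤ ∑ s, r s * c s - ∑ s, r s * min (c s) α := by
    have h1 : ∫ m in Ioc α 1, min (Q m) θ ≤ ∫ m in Ioc α 1, Q m :=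
      setIntegral_mono_on (hIOn α 1) (hQIOn α 1) measurableSet_Ioc
        (fun m _ => min_le_left (Q m) θ)
    have h2 : ∫ m in Ioc α 1, Q m = ∑ s, r s * c s - ∑ s, r s * min (c s) α := by
      rw [integral_Q r c hα1, ← Finset.sum_sub_distrib]
      exact Finset.sum_congr rfl fun s _ => by rw [min_eq_left (hc1 s)]; ring
    linarith
  -- the sum side
  have hS : ∑ y, min (p y) (θ * a y) = θ * α + (∑ y, p y - ∑ y ∈ A, p y) := by
    rw [← Finset.sum_filter_add_sum_filter_not Finset.univ (fun y => θ * a y < p y)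
      (fun y => min (p y) (θ * a y))]
    have e1 : ∑ y ∈ A, min (p y) (θ * a y) = θ * α := by
      rw [hα, Finset.mul_sum]
      apply Finset.sum_congr rfl
      intro y hy
      rw [hA, Finset.mem_filter] at hy
      exact min_eq_right hy.2.le
    have e2 : ∑ y ∈ Finset.univ.filter (fun y => ¬ θ * a y < p y), min (p y) (θ * a y)
        = ∑ y, p y - ∑ y ∈ A, p y := by
      have e3 : ∑ y ∈ Finset.univ.filter (fun y => ¬ θ * a y < p y), min (p y) (θ * a y)
          = ∑ y ∈ Finset.univ.filter (fun y => ¬ θ * a y < p y), p y := by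
        apply Finset.sum_congr rfl
        intro y hy
        rw [Finset.mem_filter] at hy
        exact min_eq_left (not_lt.1 hy.2)
      rw [e3, eq_sub_iff_add_eq, add_comm]
      exact Finset.sum_filter_add_sum_filter_not Finset.univ _ p
    rw [e1, e2]
  rw [hI, hS]
  have := hkey A
  rw [htot]
  linarith

lemma abs_mul_log_le_one {x : ℝ} (h0 : 0 ≤ x) (h1 : x ≤ 1) : |x * Real.log x| ≤ 1 := by
  rcases eq_or_lt_of_le h0 with h | h
  · simp [← h]
  · have hlog : Real.log x ≤ 0 := Real.log_nonpos h0 h1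
    have h2 : Real.log x⁻¹ ≤ x⁻¹ - 1 := Real.log_le_sub_one_of_pos (by positivity)
    rw [Real.log_inv] at h2
    have : -(x * Real.log x) ≤ 1 - x := by
      have := mul_le_mul_of_nonneg_left h2 h0
      rw [mul_sub, mul_inv_cancel₀ h.ne'] at this
      linarith
    rw [abs_of_nonpos (mul_nonpos_of_nonneg_of_nonpos h0 hlog)]
    linarith

lemma core_ineq {ι σ : Type} [Fintype ι] [Fintype σ]
    (a p : ι → ℝ) (r c : σ → ℝ)
    (ha0 : ∀ y, 0 ≤ a y) (ha1 : ∑ y, a y = 1)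
    (hp0 : ∀ y, 0 ≤ p y) (hpa : ∀ y, p y ≤ a y)
    (hr0 : ∀ s, 0 ≤ r s) (hr1 : ∑ s, r s = 1)
    (hc0 : ∀ s, 0 ≤ c s) (hc1 : ∀ s, c s ≤ 1)
    (htot : ∑ y, p y = ∑ s, r s * c s)
    (hkey : ∀ A : Finset ι, ∑ y ∈ A, p y ≤ ∑ s, r s * min (c s) (∑ y ∈ A, a y)) :
    ∑ y, (p y * Real.log (p y) - p y * Real.log (a y))
      ≤ ∫ m in Ioc (0:ℝ) 1, ((∑ s : σ, if m ≤ c s then r s else 0)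
          * Real.log (∑ s : σ, if m ≤ c s then r s else 0)) := by
  classical
  set Q : ℝ → ℝ := fun m => ∑ s : σ, if m ≤ c s then r s else 0 with hQdef
  have ha_le1 : ∀ y, a y ≤ 1 := by
    intro y
    rw [← ha1]
    exact Finset.single_le_sum (fun i _ => ha0 i) (Finset.mem_univ y)
  -- step 3: pointwise identity per y
  have h3 : ∀ y, p y * Real.log (p y) - p y * Real.log (a y)
      = p y - ∫ θ in Ioc (0:ℝ) 1, min (p y) (θ * a y) / θ := by
    intro y
    rcases eq_or_lt_of_le (ha0 y) with hay | hay
    · have hpy : p y = 0 := le_antisymm (by rw [hay]; exact hpa y) (hp0 y)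
      rw [hpy, ← hay]
      simp only [zero_mul, sub_zero, mul_zero, min_self, zero_sub, zero_div, min_zero]
      · rw [setIntegral_congr_fun measurableSet_Ioc (g := fun _ => (0:ℝ))
          (fun θ _ => by simp)]
        simp
    · rw [integral_minmul hay (hp0 y) (hpa y)]
      rcases eq_or_lt_of_le (hp0 y) with hpy | hpy
      · rw [← hpy]; simp
      · rw [Real.log_div hpy.ne' hay.ne']
        ring
  -- integrability of each θ ↦ min (p y) (θ a y) / θ
  have hyIOn : ∀ y, IntegrableOn (fun θ : ℝ => min (p y) (θ * a y) / θ) (Ioc (0:ℝ) 1) := by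
    intro y
    apply Integrable.mono' (g := fun _ => (1:ℝ))
    · exact integrableOn_const measure_Ioc_lt_top.ne
    · exact ((measurable_const.min (measurable_id.mul measurable_const)).div
        measurable_id).aestronglyMeasurable
    · filter_upwards [ae_restrict_mem measurableSet_Ioc] with θ hθ
      have h1 : 0 ≤ min (p y) (θ * a y) := le_min (hp0 y) (mul_nonneg hθ.1.le (ha0 y))
      rw [Real.norm_eq_abs, abs_div, abs_of_nonneg h1, abs_of_pos hθ.1, div_le_one hθ.1]
      calc min (p y) (θ * a y) ≤ θ * a y := min_le_right _ _
        _ ≤ θ := by nlinarith [ha_le1 y, ha0 y, hθ.1.le]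
  -- step 4: sum
  have h4 : ∑ y, (p y * Real.log (p y) - p y * Real.log (a y))
      = (∑ y, p y) - ∫ θ in Ioc (0:ℝ) 1, ∑ y, min (p y) (θ * a y) / θ := by
    rw [integral_finset_sum _ (fun y _ => hyIOn y), Finset.sum_congr rfl (fun y _ => h3 y),
      Finset.sum_sub_distrib]
  -- Fubini setup
  set Φ : ℝ × ℝ → ℝ := fun z => min (Q z.2) z.1 / z.1 with hΦdef
  have hΦmeas : Measurable Φ :=
    (((measurable_Q r c).comp measurable_snd).min measurable_fst).div measurable_fst
  have hΦint : Integrable Φ ((volume.restrict (Ioc (0:ℝ) 1)).prod (volume.restrict (Ioc (0:ℝ) 1))) := by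
    apply Integrable.mono' (g := fun _ => (1:ℝ))
    · exact integrable_const 1
    · exact hΦmeas.aestronglyMeasurable
    · rw [Measure.prod_restrict]
      filter_upwards [ae_restrict_mem (measurableSet_Ioc.prod measurableSet_Ioc)] with z hz
      obtain ⟨hz1, hz2⟩ := hz
      have h1 : 0 ≤ min (Q z.2) z.1 := le_min (Q_nonneg r c hr0 z.2) hz1.1.le
      rw [Real.norm_eq_abs, hΦdef, abs_div, abs_of_nonneg h1, abs_of_pos hz1.1, div_le_one hz1.1]
      exact min_le_right _ _
  have hswap : ∫ θ in Ioc (0:ℝ) 1, ∫ m in Ioc (0:ℝ) 1, min (Q m) θ / θ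
      = ∫ m in Ioc (0:ℝ) 1, ∫ θ in Ioc (0:ℝ) 1, min (Q m) θ / θ :=
    MeasureTheory.integral_integral_swap (f := fun θ m => min (Q m) θ / θ) hΦint
  have hmarg : IntegrableOn (fun θ => ∫ m in Ioc (0:ℝ) 1, min (Q m) θ / θ) (Ioc (0:ℝ) 1) :=
    hΦint.integral_prod_left
  -- monotonicity step
  have h5 : ∫ θ in Ioc (0:ℝ) 1, ∫ m in Ioc (0:ℝ) 1, min (Q m) θ / θ
      ≤ ∫ θ in Ioc (0:ℝ) 1, ∑ y, min (p y) (θ * a y) / θ := by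
    apply setIntegral_mono_on hmarg (integrable_finset_sum _ (fun y _ => hyIOn y)) measurableSet_Ioc
    intro θ hθ
    rw [← Finset.sum_div]
    calc ∫ m in Ioc (0:ℝ) 1, min (Q m) θ / θ
        = (∫ m in Ioc (0:ℝ) 1, min (Q m) θ) / θ := integral_div θ _
      _ ≤ (∑ y, min (p y) (θ * a y)) / θ := by
          apply (div_le_div_iff_of_pos_right hθ.1).2
          exact per_theta a p r c ha0 ha1 hp0 hr0 hr1 hc1 htot hkey hθ
  -- pointwise inner integral identity
  have h6 : ∫ m in Ioc (0:ℝ) 1, ∫ θ in Ioc (0:ℝ) 1, min (Q m) θ / θ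
      = ∫ m in Ioc (0:ℝ) 1, (Q m - Q m * Real.log (Q m)) := by
    apply setIntegral_congr_fun measurableSet_Ioc
    intro m _
    exact integral_mindiv (Q_nonneg r c hr0 m) (Q_le_one r c hr0 hr1 m)
  -- integral of Q
  have h7 : ∫ m in Ioc (0:ℝ) 1, Q m = ∑ y, p y := by
    rw [hQdef, integral_Q r c (zero_le_one), htot]
    apply Finset.sum_congr rfl
    intro s _
    rw [min_eq_left (hc1 s), min_eq_right (hc0 s)]
    ring
  have hQint1 : IntegrableOn Q (Ioc (0:ℝ) 1) := by
    apply integrableOn_comp_Q r c hr0 hr1 (F := id) measurable_id 1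
    intro x h0 h1'
    rw [id, abs_of_nonneg h0]; exact h1'
  have hQlogint : IntegrableOn (fun m => Q m * Real.log (Q m)) (Ioc (0:ℝ) 1) := by
    apply integrableOn_comp_Q r c hr0 hr1 (F := fun x => x * Real.log x)
      Real.continuous_mul_log.measurable 1
    exact fun x h0 h1' => abs_mul_log_le_one h0 h1'
  have h8 : ∫ m in Ioc (0:ℝ) 1, (Q m - Q m * Real.log (Q m))
      = (∑ y, p y) - ∫ m in Ioc (0:ℝ) 1, Q m * Real.log (Q m) := by
    rw [integral_sub hQint1 hQlogint, h7]
  calc ∑ y, (p y * Real.log (p y) - p y * Real.log (a y))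
      = (∑ y, p y) - ∫ θ in Ioc (0:ℝ) 1, ∑ y, min (p y) (θ * a y) / θ := h4
    _ ≤ (∑ y, p y) - ∫ θ in Ioc (0:ℝ) 1, ∫ m in Ioc (0:ℝ) 1, min (Q m) θ / θ := by linarith
    _ = (∑ y, p y) - ∫ m in Ioc (0:ℝ) 1, (Q m - Q m * Real.log (Q m)) := by rw [hswap, h6]
    _ = ∫ m in Ioc (0:ℝ) 1, Q m * Real.log (Q m) := by rw [h8]; ring

lemma marg_right {Ω α β : Type*} [MeasurableSpace Ω] (μ : Measure Ω) [IsProbabilityMeasure μ] [Fintype α] [MeasurableSpace α] [MeasurableSingletonClass α] [Fintype β] [MeasurableSpace β] [MeasurableSingletonClass β] {X : Ω → α} {Z : Ω → β} (hZ : Measurable Z) (x : α) :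
    ∑ z : β, (μ (X ⁻¹' {x} ∩ Z ⁻¹' {z})).toReal = (μ (X ⁻¹' {x})).toReal := by
  rw [sum_toReal_meas_inter μ hZ (X ⁻¹' {x}) Finset.univ]
  rw [Finset.coe_univ, Set.preimage_univ, Set.inter_univ]

lemma marg_left {Ω α β : Type*} [MeasurableSpace Ω] (μ : Measure Ω) [IsProbabilityMeasure μ] [Fintype α] [MeasurableSpace α] [MeasurableSingletonClass α] [Fintype β] [MeasurableSpace β] [MeasurableSingletonClass β] {X : Ω → α} {Z : Ω → β} (hX : Measurable X) (z : β) :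
    ∑ x : α, (μ (X ⁻¹' {x} ∩ Z ⁻¹' {z})).toReal = (μ (Z ⁻¹' {z})).toReal := by
  have : ∀ x : α, X ⁻¹' {x} ∩ Z ⁻¹' {z} = Z ⁻¹' {z} ∩ X ⁻¹' {x} := fun x => Set.inter_comm _ _
  simp_rw [this]
  rw [sum_toReal_meas_inter μ hX (Z ⁻¹' {z}) Finset.univ]
  rw [Finset.coe_univ, Set.preimage_univ, Set.inter_univ]

lemma pair_preimage {Ω α β : Type*} [MeasurableSpace Ω] (μ : Measure Ω) [IsProbabilityMeasure μ] [Fintype α] [MeasurableSpace α] [MeasurableSingletonClass α] [Fintype β] [MeasurableSpace β] [MeasurableSingletonClass β] (X : Ω → α) (Z : Ω → β) (x : α) (z : β) :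
    (fun ω => (X ω, Z ω)) ⁻¹' {(x, z)} = X ⁻¹' {x} ∩ Z ⁻¹' {z} := by
  ext ω; simp [Prod.ext_iff]

lemma ent_mul_log2 {Ω α : Type*} [MeasurableSpace Ω] (μ : Measure Ω) [IsProbabilityMeasure μ] [Fintype α] [MeasurableSpace α] [MeasurableSingletonClass α] (X : Ω → α) :
    ent μ X * Real.log 2
      = ∑ x : α, -((μ (X ⁻¹' {x})).toReal * Real.log ((μ (X ⁻¹' {x})).toReal)) := by
  rw [ent, Finset.sum_mul]
  apply Finset.sum_congr rfl
  intro x _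
  rw [neg_mul, Real.logb, mul_div_assoc' ,div_mul_cancel₀ _ (Real.log_pos (by norm_num)).ne']

lemma ent_sub_pair {Ω α β : Type*} [MeasurableSpace Ω] (μ : Measure Ω) [IsProbabilityMeasure μ] [Fintype α] [MeasurableSpace α] [MeasurableSingletonClass α] [Fintype β] [MeasurableSpace β] [MeasurableSingletonClass β] {X : Ω → α} {Z : Ω → β} (hX : Measurable X) (hZ : Measurable Z) :
    (ent μ X - ent μ (fun ω => (X ω, Z ω))) * Real.log 2
      = ∑ x : α, ∑ z : β,
          ((μ (X ⁻¹' {x} ∩ Z ⁻¹' {z})).toReal * Real.log ((μ (X ⁻¹' {x} ∩ Z ⁻¹' {z})).toReal)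
            - (μ (X ⁻¹' {x} ∩ Z ⁻¹' {z})).toReal * Real.log ((μ (X ⁻¹' {x})).toReal)) := by
  have e1 : ∀ x : α, ∑ z : β, (μ (X ⁻¹' {x} ∩ Z ⁻¹' {z})).toReal * Real.log ((μ (X ⁻¹' {x})).toReal)
      = (μ (X ⁻¹' {x})).toReal * Real.log ((μ (X ⁻¹' {x})).toReal) := fun x => by
    rw [← Finset.sum_mul, marg_right μ hZ x]
  rw [sub_mul, ent_mul_log2 μ X, ent_mul_log2 μ (fun ω => (X ω, Z ω))]
  rw [Fintype.sum_prod_type]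
  simp_rw [pair_preimage μ X Z, Finset.sum_sub_distrib, Finset.sum_neg_distrib, e1]
  ring

lemma gibbs_eq {ι κ : Type*} [Fintype ι] [Fintype κ]
    (u : ι → κ → ℝ) (A : ι → ℝ) (R : κ → ℝ)
    (hu0 : ∀ y s, 0 ≤ u y s)
    (hA : ∀ y, ∑ s, u y s = A y) (hR : ∀ s, ∑ y, u y s = R s)
    (hA1 : ∑ y, A y = 1) (hR1 : ∑ s, R s = 1)
    (hzero : ∑ y, ∑ s, (u y s * Real.log (u y s)
        - u y s * Real.log (A y) - u y s * Real.log (R s)) = 0) :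
    ∀ y s, u y s = A y * R s := by
  classical
  have hA0 : ∀ y, 0 ≤ A y := fun y => (hA y) ▸ Finset.sum_nonneg fun s _ => hu0 y s
  have hR0 : ∀ s, 0 ≤ R s := fun s => (hR s) ▸ Finset.sum_nonneg fun y _ => hu0 y s
  have huA : ∀ y s, u y s ≤ A y := fun y s => (hA y) ▸
    Finset.single_le_sum (fun i _ => hu0 y i) (Finset.mem_univ s)
  have huR : ∀ y s, u y s ≤ R s := fun y s => (hR s) ▸
    Finset.single_le_sum (fun i _ => hu0 i s) (Finset.mem_univ y)
  set g : ι → κ → ℝ := fun y s => (u y s * Real.log (u y s)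
      - u y s * Real.log (A y) - u y s * Real.log (R s)) - (u y s - A y * R s) with hg
  have hg0 : ∀ y s, 0 ≤ g y s := by
    intro y s
    rcases eq_or_lt_of_le (hu0 y s) with h | h
    · simp only [hg, ← h]
      simp [mul_nonneg (hA0 y) (hR0 s)]
    · have hAy : 0 < A y := lt_of_lt_of_le h (huA y s)
      have hRs : 0 < R s := lt_of_lt_of_le h (huR y s)
      have hx : 0 < A y * R s / u y s := by positivity
      have hlog := Real.log_le_sub_one_of_pos hx
      rw [Real.log_div (by positivity) h.ne', Real.log_mul hAy.ne' hRs.ne'] at hlog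
      have h2 := mul_le_mul_of_nonneg_left hlog (hu0 y s)
      have hc : u y s * (A y * R s / u y s) = A y * R s := by field_simp
      simp only [hg]
      nlinarith [h2, hc]
  have hsum : ∑ y, ∑ s, g y s = 0 := by
    have t1 : ∑ y, ∑ s, u y s = 1 := by
      rw [Finset.sum_congr rfl fun y _ => hA y, hA1]
    have t2 : ∑ y, ∑ s, A y * R s = 1 := by
      simp_rw [← Finset.mul_sum, hR1, mul_one]
      exact hA1
    simp only [hg]
    simp only [Finset.sum_sub_distrib]
    simp only [Finset.sum_sub_distrib] at hzero
    linarith [hzero, t1, t2]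
  have hgz : ∀ y s, g y s = 0 := by
    have h1 : ∀ y ∈ Finset.univ, (0:ℝ) ≤ ∑ s, g y s :=
      fun y _ => Finset.sum_nonneg fun s _ => hg0 y s
    have h2 := (Finset.sum_eq_zero_iff_of_nonneg h1).1 hsum
    intro y s
    have h3 := (Finset.sum_eq_zero_iff_of_nonneg (fun s _ => hg0 y s)).1 (h2 y (Finset.mem_univ y))
    exact h3 s (Finset.mem_univ s)
  intro y s
  rcases eq_or_lt_of_le (hu0 y s) with h | h
  · have hthis := hgz y s
    simp only [hg] at hthis
    rw [← h] at hthis ⊢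
    simp at hthis
    rcases hthis with h' | h' <;> simp [h']
  · by_contra hne
    have hAy : 0 < A y := lt_of_lt_of_le h (huA y s)
    have hRs : 0 < R s := lt_of_lt_of_le h (huR y s)
    have hx : 0 < A y * R s / u y s := by positivity
    have hxne : A y * R s / u y s ≠ 1 := by
      intro heq
      apply hne
      field_simp at heq
      linarith
    have hlog := Real.log_lt_sub_one_of_pos hx hxne
    rw [Real.log_div (by positivity) h.ne', Real.log_mul hAy.ne' hRs.ne'] at hlog
    have h2 := mul_lt_mul_of_pos_left hlog h
    have hc : u y s * (A y * R s / u y s) = A y * R s := by field_simp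
    have hgys := hgz y s
    simp only [hg] at hgys
    nlinarith [h2, hc, hgys]

lemma sum_toReal_meas_one {Ω γ : Type*} [MeasurableSpace Ω] (μ : Measure Ω)
    [IsProbabilityMeasure μ] [Fintype γ] [MeasurableSpace γ] [MeasurableSingletonClass γ]
    {X : Ω → γ} (hX : Measurable X) : ∑ x : γ, (μ (X ⁻¹' {x})).toReal = 1 := by
  have h := sum_toReal_meas_inter μ hX Set.univ Finset.univ
  simpa [measure_univ] using h

end Auxiliary

/-- **Upper bound `U₀` under perfect statistical parity.** Let `S, T, Y` be jointly
distributed random variables with values in finite sets, with `P(S = s) > 0` for all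
`s`. For each value `t` of `T` and `m ∈ [0,1]` set
`q_t(m) = Σ_{s : P(T=t|S=s) ≥ m} P(S=s)` and
`U₀ = H(T) + Σ_t ∫₀¹ q_t(m) log₂ q_t(m) dm` (with `0 log₂ 0 = 0`).
If `I(Y ; S) = 0` then `I(Y ; T) ≤ U₀`. -/
theorem upper_bound_U0_perfect_parity
    {Ω 𝒮 𝒯 𝒴 : Type} [MeasurableSpace Ω] (μ : Measure Ω) [IsProbabilityMeasure μ]
    [Fintype 𝒮] [MeasurableSpace 𝒮] [MeasurableSingletonClass 𝒮]
    [Fintype 𝒯] [MeasurableSpace 𝒯] [MeasurableSingletonClass 𝒯]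
    [Fintype 𝒴] [MeasurableSpace 𝒴] [MeasurableSingletonClass 𝒴]
    (S : Ω → 𝒮) (T : Ω → 𝒯) (Y : Ω → 𝒴)
    (hS : Measurable S) (hT : Measurable T) (hY : Measurable Y)
    (hpos : ∀ s : 𝒮, 0 < (μ (S ⁻¹' {s})).toReal)
    (q : 𝒯 → ℝ → ℝ)
    (hq : ∀ (t : 𝒯) (m : ℝ),
      q t m = ∑ s : 𝒮,
        if m ≤ (μ {ω | T ω = t ∧ S ω = s}).toReal / (μ (S ⁻¹' {s})).toReal
        then (μ (S ⁻¹' {s})).toReal else 0)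
    (hYS : mutInf μ Y S = 0) :
    mutInf μ Y T ≤
      ent μ T + ∑ t : 𝒯, ∫ m in (0:ℝ)..(1:ℝ), q t m * Real.logb 2 (q t m) := by
  classical
  have hlog2 : (0:ℝ) < Real.log 2 := Real.log_pos (by norm_num)
  have tmono : ∀ {E F : Set Ω}, E ⊆ F → (μ E).toReal ≤ (μ F).toReal := by
    intro E F h
    exact (ENNReal.toReal_le_toReal (measure_ne_top μ E) (measure_ne_top μ F)).2 (measure_mono h)
  -- independence of Y and S
  have hindep : ∀ (y : 𝒴) (s : 𝒮),
      (μ (Y ⁻¹' {y} ∩ S ⁻¹' {s})).toReal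
        = (μ (Y ⁻¹' {y})).toReal * (μ (S ⁻¹' {s})).toReal := by
    apply gibbs_eq (u := fun y s => (μ (Y ⁻¹' {y} ∩ S ⁻¹' {s})).toReal)
      (A := fun y => (μ (Y ⁻¹' {y})).toReal) (R := fun s => (μ (S ⁻¹' {s})).toReal)
      (fun _ _ => ENNReal.toReal_nonneg)
      (fun y => marg_right μ hS y) (fun s => marg_left μ hY s)
      (sum_toReal_meas_one μ hY) (sum_toReal_meas_one μ hS)
    have h1 := ent_sub_pair μ hY hS
    have h2 : ent μ S * Real.log 2
        = ∑ y : 𝒴, ∑ s : 𝒮, -((μ (Y ⁻¹' {y} ∩ S ⁻¹' {s})).toReal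
            * Real.log ((μ (S ⁻¹' {s})).toReal)) := by
      rw [ent_mul_log2 μ S]
      have e : ∀ s : 𝒮, -((μ (S ⁻¹' {s})).toReal * Real.log ((μ (S ⁻¹' {s})).toReal))
          = ∑ y : 𝒴, -((μ (Y ⁻¹' {y} ∩ S ⁻¹' {s})).toReal
              * Real.log ((μ (S ⁻¹' {s})).toReal)) := by
        intro s
        have h := marg_left (X := Y) (Z := S) μ hY s
        rw [eq_comm, Finset.sum_neg_distrib, ← Finset.sum_mul, h]
      simp_rw [e]
      rw [Finset.sum_comm]
    have e2 : ∀ (y : 𝒴) (s : 𝒮),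
        ((μ (Y ⁻¹' {y} ∩ S ⁻¹' {s})).toReal * Real.log ((μ (Y ⁻¹' {y} ∩ S ⁻¹' {s})).toReal)
          - (μ (Y ⁻¹' {y} ∩ S ⁻¹' {s})).toReal * Real.log ((μ (Y ⁻¹' {y})).toReal)
          - (μ (Y ⁻¹' {y} ∩ S ⁻¹' {s})).toReal * Real.log ((μ (S ⁻¹' {s})).toReal))
        = ((μ (Y ⁻¹' {y} ∩ S ⁻¹' {s})).toReal * Real.log ((μ (Y ⁻¹' {y} ∩ S ⁻¹' {s})).toReal)
          - (μ (Y ⁻¹' {y} ∩ S ⁻¹' {s})).toReal * Real.log ((μ (Y ⁻¹' {y})).toReal))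
          + (-((μ (Y ⁻¹' {y} ∩ S ⁻¹' {s})).toReal * Real.log ((μ (S ⁻¹' {s})).toReal))) :=
      fun y s => by ring
    calc ∑ y : 𝒴, ∑ s : 𝒮, ((μ (Y ⁻¹' {y} ∩ S ⁻¹' {s})).toReal
            * Real.log ((μ (Y ⁻¹' {y} ∩ S ⁻¹' {s})).toReal)
          - (μ (Y ⁻¹' {y} ∩ S ⁻¹' {s})).toReal * Real.log ((μ (Y ⁻¹' {y})).toReal)
          - (μ (Y ⁻¹' {y} ∩ S ⁻¹' {s})).toReal * Real.log ((μ (S ⁻¹' {s})).toReal))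
        = (∑ y : 𝒴, ∑ s : 𝒮, ((μ (Y ⁻¹' {y} ∩ S ⁻¹' {s})).toReal
            * Real.log ((μ (Y ⁻¹' {y} ∩ S ⁻¹' {s})).toReal)
          - (μ (Y ⁻¹' {y} ∩ S ⁻¹' {s})).toReal * Real.log ((μ (Y ⁻¹' {y})).toReal)))
          + ∑ y : 𝒴, ∑ s : 𝒮, -((μ (Y ⁻¹' {y} ∩ S ⁻¹' {s})).toReal
              * Real.log ((μ (S ⁻¹' {s})).toReal)) := by
          simp_rw [e2, Finset.sum_add_distrib]
      _ = (ent μ Y - ent μ (fun ω => (Y ω, S ω))) * Real.log 2 + ent μ S * Real.log 2 := by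
          rw [h1, h2]
      _ = mutInf μ Y S * Real.log 2 := by simp only [mutInf]; ring
      _ = 0 := by rw [hYS, zero_mul]
  -- key subset inequality
  have hkey : ∀ (t : 𝒯) (A : Finset 𝒴),
      ∑ y ∈ A, (μ (Y ⁻¹' {y} ∩ T ⁻¹' {t})).toReal
        ≤ ∑ s : 𝒮, (μ (S ⁻¹' {s})).toReal *
            min ((μ (T ⁻¹' {t} ∩ S ⁻¹' {s})).toReal / (μ (S ⁻¹' {s})).toReal)
              (∑ y ∈ A, (μ (Y ⁻¹' {y})).toReal) := by
    intro t A
    have e1 : ∑ y ∈ A, (μ (Y ⁻¹' {y} ∩ T ⁻¹' {t})).toReal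
        = (μ (T ⁻¹' {t} ∩ Y ⁻¹' ↑A)).toReal := by
      rw [← sum_toReal_meas_inter μ hY (T ⁻¹' {t}) A]
      exact Finset.sum_congr rfl fun y _ => by rw [Set.inter_comm]
    have e2 : (μ (T ⁻¹' {t} ∩ Y ⁻¹' ↑A)).toReal
        = ∑ s : 𝒮, (μ ((T ⁻¹' {t} ∩ Y ⁻¹' ↑A) ∩ S ⁻¹' {s})).toReal := by
      rw [sum_toReal_meas_inter μ hS _ Finset.univ, Finset.coe_univ, Set.preimage_univ,
        Set.inter_univ]
    rw [e1, e2]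
    apply Finset.sum_le_sum
    intro s _
    have hr := hpos s
    have b1 : (μ ((T ⁻¹' {t} ∩ Y ⁻¹' ↑A) ∩ S ⁻¹' {s})).toReal
        ≤ (μ (T ⁻¹' {t} ∩ S ⁻¹' {s})).toReal :=
      tmono (Set.inter_subset_inter_left _ Set.inter_subset_left)
    have b2 : (μ ((T ⁻¹' {t} ∩ Y ⁻¹' ↑A) ∩ S ⁻¹' {s})).toReal
        ≤ (∑ y ∈ A, (μ (Y ⁻¹' {y})).toReal) * (μ (S ⁻¹' {s})).toReal := by
      have e3 : (μ (Y ⁻¹' ↑A ∩ S ⁻¹' {s})).toReal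
          = ∑ y ∈ A, (μ (Y ⁻¹' {y} ∩ S ⁻¹' {s})).toReal := by
        rw [Set.inter_comm, ← sum_toReal_meas_inter μ hY (S ⁻¹' {s}) A]
        exact Finset.sum_congr rfl fun y _ => by rw [Set.inter_comm]
      calc (μ ((T ⁻¹' {t} ∩ Y ⁻¹' ↑A) ∩ S ⁻¹' {s})).toReal
          ≤ (μ (Y ⁻¹' ↑A ∩ S ⁻¹' {s})).toReal :=
            tmono (Set.inter_subset_inter_left _ Set.inter_subset_right)
        _ = ∑ y ∈ A, (μ (Y ⁻¹' {y} ∩ S ⁻¹' {s})).toReal := e3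
        _ = ∑ y ∈ A, (μ (Y ⁻¹' {y})).toReal * (μ (S ⁻¹' {s})).toReal :=
            Finset.sum_congr rfl fun y _ => hindep y s
        _ = (∑ y ∈ A, (μ (Y ⁻¹' {y})).toReal) * (μ (S ⁻¹' {s})).toReal :=
            (Finset.sum_mul _ _ _).symm
    have emin : (μ (S ⁻¹' {s})).toReal *
          min ((μ (T ⁻¹' {t} ∩ S ⁻¹' {s})).toReal / (μ (S ⁻¹' {s})).toReal)
            (∑ y ∈ A, (μ (Y ⁻¹' {y})).toReal)
        = min ((μ (T ⁻¹' {t} ∩ S ⁻¹' {s})).toReal)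
            ((∑ y ∈ A, (μ (Y ⁻¹' {y})).toReal) * (μ (S ⁻¹' {s})).toReal) := by
      rw [mul_min_of_nonneg _ _ hr.le]
      congr 1
      · rw [mul_comm, div_mul_cancel₀ _ hr.ne']
      · rw [mul_comm]
    rw [emin]
    exact le_min b1 b2
  -- rewrite q
  have hq' : ∀ (t : 𝒯) (m : ℝ), q t m = ∑ s : 𝒮,
      if m ≤ (μ (T ⁻¹' {t} ∩ S ⁻¹' {s})).toReal / (μ (S ⁻¹' {s})).toReal
      then (μ (S ⁻¹' {s})).toReal else 0 := by
    intro t m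
    rw [hq t m]
    apply Finset.sum_congr rfl
    intro s _
    have hset : {ω | T ω = t ∧ S ω = s} = T ⁻¹' {t} ∩ S ⁻¹' {s} := rfl
    rw [hset]
  -- per-t core inequality
  have key_t : ∀ t : 𝒯,
      ∑ y : 𝒴, ((μ (Y ⁻¹' {y} ∩ T ⁻¹' {t})).toReal
            * Real.log ((μ (Y ⁻¹' {y} ∩ T ⁻¹' {t})).toReal)
          - (μ (Y ⁻¹' {y} ∩ T ⁻¹' {t})).toReal * Real.log ((μ (Y ⁻¹' {y})).toReal))
        ≤ ∫ m in Set.Ioc (0:ℝ) 1, q t m * Real.log (q t m) := by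
    intro t
    have htot : ∑ y : 𝒴, (μ (Y ⁻¹' {y} ∩ T ⁻¹' {t})).toReal
        = ∑ s : 𝒮, (μ (S ⁻¹' {s})).toReal *
            ((μ (T ⁻¹' {t} ∩ S ⁻¹' {s})).toReal / (μ (S ⁻¹' {s})).toReal) := by
      rw [marg_left μ hY t]
      have e : ∀ s : 𝒮, (μ (S ⁻¹' {s})).toReal *
          ((μ (T ⁻¹' {t} ∩ S ⁻¹' {s})).toReal / (μ (S ⁻¹' {s})).toReal)
            = (μ (T ⁻¹' {t} ∩ S ⁻¹' {s})).toReal := by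
        intro s
        rw [mul_comm, div_mul_cancel₀ _ (hpos s).ne']
      rw [Finset.sum_congr rfl fun s _ => e s, marg_right μ hS t]
    have hcore := core_ineq (fun y => (μ (Y ⁻¹' {y})).toReal)
      (fun y => (μ (Y ⁻¹' {y} ∩ T ⁻¹' {t})).toReal)
      (fun s => (μ (S ⁻¹' {s})).toReal)
      (fun s => (μ (T ⁻¹' {t} ∩ S ⁻¹' {s})).toReal / (μ (S ⁻¹' {s})).toReal)
      (fun _ => ENNReal.toReal_nonneg) (sum_toReal_meas_one μ hY)
      (fun _ => ENNReal.toReal_nonneg) (fun y => tmono Set.inter_subset_left)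
      (fun _ => ENNReal.toReal_nonneg) (sum_toReal_meas_one μ hS)
      (fun s => div_nonneg ENNReal.toReal_nonneg ENNReal.toReal_nonneg)
      (fun s => (div_le_one (hpos s)).2 (tmono Set.inter_subset_right))
      htot (hkey t)
    have erw : (fun m : ℝ => q t m * Real.log (q t m))
        = fun m : ℝ => (∑ s : 𝒮,
            if m ≤ (μ (T ⁻¹' {t} ∩ S ⁻¹' {s})).toReal / (μ (S ⁻¹' {s})).toReal
            then (μ (S ⁻¹' {s})).toReal else 0)
          * Real.log (∑ s : 𝒮,
            if m ≤ (μ (T ⁻¹' {t} ∩ S ⁻¹' {s})).toReal / (μ (S ⁻¹' {s})).toReal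
            then (μ (S ⁻¹' {s})).toReal else 0) := by
      funext m
      rw [hq' t m]
    rw [show (∫ m in Set.Ioc (0:ℝ) 1, q t m * Real.log (q t m))
        = ∫ m in Set.Ioc (0:ℝ) 1, (∑ s : 𝒮,
            if m ≤ (μ (T ⁻¹' {t} ∩ S ⁻¹' {s})).toReal / (μ (S ⁻¹' {s})).toReal
            then (μ (S ⁻¹' {s})).toReal else 0)
          * Real.log (∑ s : 𝒮,
            if m ≤ (μ (T ⁻¹' {t} ∩ S ⁻¹' {s})).toReal / (μ (S ⁻¹' {s})).toReal
            then (μ (S ⁻¹' {s})).toReal else 0) from by rw [erw]]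
    exact hcore
  -- final assembly
  have hMain : (ent μ Y - ent μ (fun ω => (Y ω, T ω))) * Real.log 2
      ≤ (∑ t : 𝒯, ∫ m in (0:ℝ)..(1:ℝ), q t m * Real.logb 2 (q t m)) * Real.log 2 := by
    rw [ent_sub_pair μ hY hT, Finset.sum_comm, Finset.sum_mul]
    apply Finset.sum_le_sum
    intro t _
    have eR : (∫ m in (0:ℝ)..(1:ℝ), q t m * Real.logb 2 (q t m)) * Real.log 2
        = ∫ m in Set.Ioc (0:ℝ) 1, q t m * Real.log (q t m) := by
      rw [intervalIntegral.integral_of_le zero_le_one, ← integral_mul_const]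
      apply setIntegral_congr_fun measurableSet_Ioc
      intro m _
      simp only [Real.logb]
      field_simp
    rw [eR]
    exact key_t t
  have hfin := le_of_mul_le_mul_right hMain hlog2
  simp only [mutInf]
  linarith
end

section
/- Upper bound of Theorem 2 (bounded statistical parity): Let S, X, T, Y be jointly distributed random variables taking values in finite sets, and let r ≥ 0 and ε ≥ 0. If I(Y;S) ≤ ε and I(X;Y) ≤ r, then I(Y;T) ≤ min{H(T|S) + ε, H(T|X) + r}. -/
open MeasureTheory ProbabilityTheory

/-!
The first bound `I(Y;T) ≤ H(T|S) + I(Y;S)` is equivalent to `H(T) + H(Y,S) ≤ H(Y,T) + H(T,S)`.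
This follows from `H(Y,S) ≤ H(Y,T,S)` (forgetting a coordinate does not increase entropy) and
the submodularity `H(Y,T,S) + H(T) ≤ H(Y,T) + H(T,S)`, which for each value of `T` is the
subadditivity of entropy, i.e. Gibbs' inequality against the product of the marginals.
The second bound is the same inequality with `X` in place of `S`.
-/

open Finset Real

theorem sum_mul_log_le_sum_mul_log_self {ι : Type*} [Fintype ι] (w q : ι → ℝ)
    (hw : ∀ i, 0 ≤ w i) (hq : ∀ i, 0 ≤ q i) (hqw : ∀ i, q i = 0 → w i = 0)
    (hsum : ∑ i, q i ≤ ∑ i, w i) :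
    ∑ i, w i * log (q i) ≤ ∑ i, w i * log (w i) := by
  have pointwise : ∀ i, w i * log (q i) ≤ w i * log (w i) + (q i - w i) := by
    intro i
    rcases (hw i).eq_or_lt with hw0 | hwpos
    · simp [← hw0, hq i]
    have hqpos : 0 < q i := (hq i).lt_of_ne fun h => hwpos.ne' (hqw i h.symm)
    have hlog := log_le_sub_one_of_pos (div_pos hqpos hwpos)
    rw [log_div hqpos.ne' hwpos.ne'] at hlog
    have := mul_le_mul_of_nonneg_left hlog hwpos.le
    rw [mul_sub, mul_sub_one, mul_div_cancel₀ _ hwpos.ne'] at this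
    linarith
  have := sum_le_sum fun i (_ : i ∈ univ) => pointwise i
  rw [sum_add_distrib, sum_sub_distrib] at this
  linarith

theorem negMulLog_sum_le_sum_negMulLog {ι : Type*} (s : Finset ι) (f : ι → ℝ)
    (hf : ∀ i ∈ s, 0 ≤ f i) :
    negMulLog (∑ i ∈ s, f i) ≤ ∑ i ∈ s, negMulLog (f i) := by
  simp only [negMulLog, neg_mul, sum_mul, ← sum_neg_distrib]
  refine sum_le_sum fun i hi => neg_le_neg ?_
  rcases (hf i hi).eq_or_lt with h0 | hpos
  · simp [← h0]
  · exact mul_le_mul_of_nonneg_left (log_le_log hpos (single_le_sum hf hi)) hpos.le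

theorem sum_negMulLog_add_negMulLog_sum_le {α β : Type*} [Fintype α] [Fintype β]
    (m : α → β → ℝ) (hm : ∀ a b, 0 ≤ m a b) :
    ∑ a, ∑ b, negMulLog (m a b) + negMulLog (∑ a, ∑ b, m a b) ≤
      ∑ a, negMulLog (∑ b, m a b) + ∑ b, negMulLog (∑ a, m a b) := by
  set r : α → ℝ := fun a => ∑ b, m a b
  set c : β → ℝ := fun b => ∑ a, m a b
  set s : ℝ := ∑ a, ∑ b, m a b
  have hr : ∀ a b, m a b ≤ r a := fun a b => single_le_sum (fun b _ => hm a b) (mem_univ b)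
  have hc : ∀ a b, m a b ≤ c b := fun a b => single_le_sum (fun a _ => hm a b) (mem_univ a)
  have hs : ∀ a, r a ≤ s := fun a =>
    single_le_sum (f := r) (fun a _ => sum_nonneg fun b _ => hm a b) (mem_univ a)
  have hr0 : ∀ a, 0 ≤ r a := fun a => sum_nonneg fun b _ => hm a b
  have hc0 : ∀ b, 0 ≤ c b := fun b => sum_nonneg fun a _ => hm a b
  have hs0 : 0 ≤ s := sum_nonneg fun a _ => hr0 a
  have hcs : ∑ b, c b = s := sum_comm
  -- Gibbs' inequality against the product of the marginals `q (a, b) = r a * c b / s`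
  have gibbs := sum_mul_log_le_sum_mul_log_self (fun x : α × β => m x.1 x.2)
    (fun x => r x.1 * c x.2 / s) (fun x => hm x.1 x.2)
    (fun x => div_nonneg (mul_nonneg (hr0 x.1) (hc0 x.2)) hs0) ?_ ?_
  · have split_log : ∀ a b, m a b * log (r a * c b / s) =
        m a b * log (r a) + m a b * log (c b) - m a b * log s := by
      intro a b
      rcases (hm a b).eq_or_lt with h0 | hpos
      · simp [← h0]
      have hrpos := hpos.trans_le (hr a b)
      rw [log_div (mul_pos hrpos (hpos.trans_le (hc a b))).ne' (hrpos.trans_le (hs a)).ne',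
        log_mul hrpos.ne' (hpos.trans_le (hc a b)).ne']
      ring
    simp only [Fintype.sum_prod_type, split_log, sum_add_distrib, sum_sub_distrib] at gibbs
    have hrows : ∑ a, ∑ b, m a b * log (r a) = ∑ a, r a * log (r a) := by
      simp only [r, sum_mul]
    have hcols : ∑ a, ∑ b, m a b * log (c b) = ∑ b, c b * log (c b) := by
      rw [sum_comm]; simp only [c, sum_mul]
    have htotal : ∑ a, ∑ b, m a b * log s = s * log s := by
      simp only [s, sum_mul]
    rw [hrows, hcols, htotal] at gibbs
    simp only [negMulLog, neg_mul, sum_neg_distrib]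
    linarith
  · rintro ⟨a, b⟩ hq
    by_contra hne
    have hpos := (hm a b).lt_of_ne' hne
    have hrpos := hpos.trans_le (hr a b)
    have : 0 < r a * c b / s :=
      div_pos (mul_pos hrpos (hpos.trans_le (hc a b))) (hrpos.trans_le (hs a))
    exact this.ne' hq
  · have hqsum : ∑ a, ∑ b, r a * c b / s = s := by
      simp_rw [mul_div_assoc, ← mul_sum, ← sum_mul, ← sum_div, hcs, ← mul_div_assoc]
      exact mul_self_div_self s
    simp only [Fintype.sum_prod_type, hqsum]
    exact le_rfl

theorem preimage_pair_singleton {Ω α β : Type*} (f : Ω → α) (g : Ω → β)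
    (a : α) (b : β) :
    (fun ω => (f ω, g ω)) ⁻¹' {(a, b)} = f ⁻¹' {a} ∩ g ⁻¹' {b} := by
  rw [← Set.singleton_prod_singleton, Set.mk_preimage_prod]

section Measure

variable {Ω : Type*} [MeasurableSpace Ω] (μ : Measure Ω)

theorem measureReal_eq_sum_measureReal_preimage_singleton_inter [IsFiniteMeasure μ]
    {κ : Type*} [Fintype κ] [MeasurableSpace κ] [MeasurableSingletonClass κ]
    {W : Ω → κ} (hW : Measurable W) (E : Set Ω) :
    μ.real E = ∑ k, μ.real (W ⁻¹' {k} ∩ E) := by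
  rw [← measureReal_restrict_apply_univ, ← Set.preimage_univ (f := W), ← coe_univ,
    ← sum_measureReal_preimage_singleton _ fun k _ => hW (measurableSet_singleton k)]
  exact sum_congr rfl fun k _ => measureReal_restrict_apply (hW (measurableSet_singleton k))

theorem ent_eq_sum_negMulLog {α : Type*} [Fintype α] (X : Ω → α) :
    ent μ X = (∑ a, negMulLog (μ.real (X ⁻¹' {a}))) / log 2 := by
  simp only [ent, logb, negMulLog, sum_div, measureReal_def]
  exact sum_congr rfl fun a _ => by ring

theorem ent_pair_eq {α β : Type*} [Fintype α] [Fintype β] (f : Ω → α) (g : Ω → β) :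
    ent μ (fun ω => (f ω, g ω)) =
      (∑ a, ∑ b, negMulLog (μ.real (f ⁻¹' {a} ∩ g ⁻¹' {b}))) / log 2 := by
  simp only [ent_eq_sum_negMulLog, Fintype.sum_prod_type, preimage_pair_singleton]

theorem ent_pair_comm {α β : Type*} [Fintype α] [Fintype β] (f : Ω → α) (g : Ω → β) :
    ent μ (fun ω => (f ω, g ω)) = ent μ (fun ω => (g ω, f ω)) := by
  simp only [ent_pair_eq, Set.inter_comm (f ⁻¹' _)]
  rw [sum_comm]

theorem mutInf_comm {α β : Type*} [Fintype α] [Fintype β] (f : Ω → α) (g : Ω → β) :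
    mutInf μ f g = mutInf μ g f := by
  rw [mutInf, mutInf, ent_pair_comm, add_comm (ent μ f)]

variable [IsFiniteMeasure μ] {α γ β : Type*}
  [Fintype α] [MeasurableSpace α] [MeasurableSingletonClass α]
  [Fintype γ] [MeasurableSpace γ] [MeasurableSingletonClass γ]
  [Fintype β] [MeasurableSpace β] [MeasurableSingletonClass β]
  {A : Ω → α} {T : Ω → γ} {B : Ω → β}

theorem ent_add_ent_pair_le (hA : Measurable A) (hT : Measurable T) (hB : Measurable B) :
    ent μ T + ent μ (fun ω => (A ω, B ω)) ≤
      ent μ (fun ω => (A ω, T ω)) + ent μ (fun ω => (T ω, B ω)) := by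
  set p : α → γ → β → ℝ := fun a t b =>
    μ.real (A ⁻¹' {a} ∩ T ⁻¹' {t} ∩ B ⁻¹' {b})
  have hp : ∀ a t b, 0 ≤ p a t b := fun _ _ _ => measureReal_nonneg
  have sum_over_A := measureReal_eq_sum_measureReal_preimage_singleton_inter μ hA
  have sum_over_T := measureReal_eq_sum_measureReal_preimage_singleton_inter μ hT
  have sum_over_B := measureReal_eq_sum_measureReal_preimage_singleton_inter μ hB
  have margAT : ∀ a t, μ.real (A ⁻¹' {a} ∩ T ⁻¹' {t}) = ∑ b, p a t b := fun a t => by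
    simp only [sum_over_B (A ⁻¹' {a} ∩ T ⁻¹' {t}), p, Set.inter_comm (B ⁻¹' _)]
  have margTB : ∀ t b, μ.real (T ⁻¹' {t} ∩ B ⁻¹' {b}) = ∑ a, p a t b := fun t b => by
    simp only [sum_over_A (T ⁻¹' {t} ∩ B ⁻¹' {b}), p, Set.inter_assoc]
  have margAB : ∀ a b, μ.real (A ⁻¹' {a} ∩ B ⁻¹' {b}) = ∑ t, p a t b := fun a b => by
    simp only [sum_over_T (A ⁻¹' {a} ∩ B ⁻¹' {b}), p, Set.inter_left_comm (T ⁻¹' _),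
      Set.inter_assoc]
  have margT : ∀ t, μ.real (T ⁻¹' {t}) = ∑ a, ∑ b, p a t b := fun t => by
    simp only [sum_over_A (T ⁻¹' {t}), margAT]
  rw [ent_pair_eq, ent_pair_eq, ent_pair_eq, ent_eq_sum_negMulLog, ← add_div, ← add_div,
    div_le_div_iff_of_pos_right (log_pos one_lt_two)]
  simp only [margAT, margTB, margAB, margT]
  have marginal :
      ∑ a, ∑ b, negMulLog (∑ t, p a t b) ≤ ∑ a, ∑ t, ∑ b, negMulLog (p a t b) := by
    refine sum_le_sum fun a _ => ?_
    rw [sum_comm]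
    exact sum_le_sum fun b _ => negMulLog_sum_le_sum_negMulLog _ _ fun t _ => hp a t b
  have slices := sum_le_sum fun t (_ : t ∈ univ) =>
    sum_negMulLog_add_negMulLog_sum_le (fun a b => p a t b) fun a b => hp a t b
  simp only [sum_add_distrib] at slices
  rw [sum_comm (f := fun a t => ∑ b, negMulLog (p a t b))] at marginal
  rw [sum_comm (f := fun a t => negMulLog (∑ b, p a t b))]
  linarith

theorem mutInf_le_condEnt_add_mutInf (hA : Measurable A) (hT : Measurable T)
    (hB : Measurable B) : mutInf μ A T ≤ condEnt μ T B + mutInf μ A B := by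
  have := ent_add_ent_pair_le μ hA hT hB
  simp only [mutInf, condEnt]
  linarith

end Measure

theorem upper_bound_bounded_parity_general
    {Ω 𝒮 𝒳 𝒯 𝒴 : Type} [MeasurableSpace Ω] (μ : Measure Ω) [IsProbabilityMeasure μ]
    [Fintype 𝒮] [MeasurableSpace 𝒮] [MeasurableSingletonClass 𝒮]
    [Fintype 𝒳] [MeasurableSpace 𝒳] [MeasurableSingletonClass 𝒳]
    [Fintype 𝒯] [MeasurableSpace 𝒯] [MeasurableSingletonClass 𝒯]
    [Fintype 𝒴] [MeasurableSpace 𝒴] [MeasurableSingletonClass 𝒴]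
    (S : Ω → 𝒮) (X : Ω → 𝒳) (T : Ω → 𝒯) (Y : Ω → 𝒴)
    (hS : Measurable S) (hX : Measurable X) (hT : Measurable T) (hY : Measurable Y)
    (r ε : ℝ)
    (hparity : mutInf μ Y S ≤ ε) (hrate : mutInf μ X Y ≤ r) :
    mutInf μ Y T ≤ min (condEnt μ T S + ε) (condEnt μ T X + r) := by
  have via_S := mutInf_le_condEnt_add_mutInf μ hY hT hS
  have via_X := mutInf_le_condEnt_add_mutInf μ hY hT hX
  rw [mutInf_comm μ Y X] at via_X
  exact le_min (by linarith) (by linarith)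

/-- **Upper bound of Theorem 2 (bounded statistical parity).** If `I(Y;S) ≤ ε` and
`I(X;Y) ≤ r` with `r, ε ≥ 0`, then `I(Y;T) ≤ min{H(T|S) + ε, H(T|X) + r}`. -/
theorem upper_bound_bounded_parity
    {Ω 𝒮 𝒳 𝒯 𝒴 : Type} [MeasurableSpace Ω] (μ : Measure Ω) [IsProbabilityMeasure μ]
    [Fintype 𝒮] [MeasurableSpace 𝒮] [MeasurableSingletonClass 𝒮]
    [Fintype 𝒳] [MeasurableSpace 𝒳] [MeasurableSingletonClass 𝒳]
    [Fintype 𝒯] [MeasurableSpace 𝒯] [MeasurableSingletonClass 𝒯]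
    [Fintype 𝒴] [MeasurableSpace 𝒴] [MeasurableSingletonClass 𝒴]
    (S : Ω → 𝒮) (X : Ω → 𝒳) (T : Ω → 𝒯) (Y : Ω → 𝒴)
    (hS : Measurable S) (hX : Measurable X) (hT : Measurable T) (hY : Measurable Y)
    (r ε : ℝ) (hr : 0 ≤ r) (hε : 0 ≤ ε)
    (hparity : mutInf μ Y S ≤ ε) (hrate : mutInf μ X Y ≤ r) :
    mutInf μ Y T ≤ min (condEnt μ T S + ε) (condEnt μ T X + r) :=
  upper_bound_bounded_parity_general μ S X T Y hS hX hT hY r ε hparity hrate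
end
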